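/- arXiv:math/0312024 — 11 statements merged into one kernel-verified Lean document; each statement's English description precedes it below -/
import Mathlib

section
/- If W is a finite-dimensional irreducible gl_d(ℂ)-module and α ∈ ℂ^d, then F^α(W) is irreducible as an (A, Der A)-module: every nonzero ℂ-subspace of W ⊗ A that is invariant under all operators μ(t^r) (r ∈ ℤ^d) and all operators ρ(D(u,r)) (u ∈ ℂ^d, r ∈ ℤ^d) equals W ⊗ A. -/
open scoped TensorProduct

attribute [local instance 100] LieRing.ofAssociativeRing

/-- `A = ℂ[t₁^{±1},…,t_d^{±1}]`, the group algebra of `ℤ^d` over `ℂ`. -/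
abbrev Ad (d : ℕ) := AddMonoidAlgebra ℂ (Fin d → ℤ)

/-- The monomial `t^r`. -/
noncomputable def tm {d : ℕ} (r : Fin d → ℤ) : Ad d := AddMonoidAlgebra.single r 1

/-- `IsD u r D` says that the derivation `D` of `A` is `D(u,r) = ∑ᵢ uᵢ t^r tᵢ ∂/∂tᵢ`. -/
def IsD {d : ℕ} (u : Fin d → ℂ) (r : Fin d → ℤ)
    (D : Derivation ℂ (Ad d) (Ad d)) : Prop :=
  ∀ s : Fin d → ℤ, D (tm s) = (∑ i, u i * (s i : ℂ)) • tm (r + s)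

lemma tm_mul_tm {d : ℕ} (a b : Fin d → ℤ) : tm a * tm b = tm (a + b) := by
  simp [tm, AddMonoidAlgebra.single_mul_single]

lemma smul_tm {d : ℕ} (c : ℂ) (a : Fin d → ℤ) :
    c • tm a = AddMonoidAlgebra.single a c := by
  simp [tm, Finsupp.smul_single]

noncomputable def DurL {d : ℕ} (u : Fin d → ℂ) (r : Fin d → ℤ) : Ad d →ₗ[ℂ] Ad d :=
  Finsupp.lsum ℂ (fun s => LinearMap.toSpanSingleton ℂ (Ad d)
      ((∑ i, u i * (s i : ℂ)) • tm (r + s))) ∘ₗ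
    (AddMonoidAlgebra.coeffLinearEquiv ℂ).toLinearMap

lemma DurL_single {d : ℕ} (u : Fin d → ℂ) (r : Fin d → ℤ) (s : Fin d → ℤ) (c : ℂ) :
    DurL u r (AddMonoidAlgebra.single s c)
      = (c * ∑ i, u i * (s i : ℂ)) • tm (r + s) := by
  rw [DurL, LinearMap.comp_apply, LinearEquiv.coe_coe, AddMonoidAlgebra.coeffLinearEquiv_apply,
    AddMonoidAlgebra.coeff_single]
  erw [Finsupp.lsum_single, LinearMap.toSpanSingleton_apply, smul_smul]

lemma DurL_mul {d : ℕ} (u : Fin d → ℂ) (r : Fin d → ℤ) (a b : Ad d) :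
    DurL u r (a * b) = a * DurL u r b + b * DurL u r a := by
  induction a using AddMonoidAlgebra.induction_linear with
  | zero => simp
  | add f g hf hg =>
      simp only [add_mul, mul_add, map_add, hf, hg]
      ring
  | single s c =>
    induction b using AddMonoidAlgebra.induction_linear with
    | zero => simp
    | add f g hf hg =>
        simp only [add_mul, mul_add, map_add, hf, hg]
        ring
    | single t c' =>
        rw [AddMonoidAlgebra.single_mul_single]
        rw [DurL_single, DurL_single, DurL_single]
        rw [mul_smul_comm, mul_smul_comm]
        have h1 : s + (r + t) = r + (s + t) := by ring
        have h2 : t + (r + s) = r + (s + t) := by ring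
        have h3 : (∑ i, u i * ((s + t) i : ℂ))
            = (∑ i, u i * (s i : ℂ)) + ∑ i, u i * (t i : ℂ) := by
          rw [← Finset.sum_add_distrib]
          congr 1; funext i; push_cast [Pi.add_apply]; ring
        simp only [tm, AddMonoidAlgebra.single_mul_single, mul_one, Finsupp.smul_single,
          smul_eq_mul, h1, h2, AddMonoidAlgebra.smul_single']
        rw [← AddMonoidAlgebra.single_add]
        congr 1
        rw [h3]; ring

noncomputable def Dur {d : ℕ} (u : Fin d → ℂ) (r : Fin d → ℤ) :
    Derivation ℂ (Ad d) (Ad d) where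
  toLinearMap := DurL u r
  map_one_eq_zero' := by
    have : (1 : Ad d) = AddMonoidAlgebra.single 0 1 := rfl
    rw [this, DurL_single]; simp
  leibniz' a b := by
    simpa [smul_eq_mul, mul_comm] using DurL_mul u r a b

lemma Dur_apply {d : ℕ} (u : Fin d → ℂ) (r : Fin d → ℤ) (a : Ad d) :
    Dur u r a = DurL u r a := rfl

lemma isD_Dur {d : ℕ} (u : Fin d → ℂ) (r : Fin d → ℤ) : IsD u r (Dur u r) := by
  intro s
  rw [Dur_apply, tm, DurL_single]
  simp [tm]

/-- If `W` is a finite-dimensional irreducible `gl_d(ℂ)`-module and `α ∈ ℂ^d`, then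
`F^α(W) = W ⊗ A`, with the `(A, Der A)`-module structure `(μ, ρ)` of Larsson, is
irreducible as an `(A, Der A)`-module: every nonzero `ℂ`-subspace of `W ⊗ A` invariant
under all `μ(t^r)`, `r ∈ ℤ^d`, and all `ρ(D(u,r))`, `u ∈ ℂ^d`, `r ∈ ℤ^d`,
equals `W ⊗ A`. -/
theorem larsson_module_irreducible (d : ℕ) (hd : 2 ≤ d) (α : Fin d → ℂ)
    (W : Type*) [AddCommGroup W] [Module ℂ W] [Nontrivial W] [FiniteDimensional ℂ W]
    (E : Matrix (Fin d) (Fin d) ℂ →ₗ⁅ℂ⁆ Module.End ℂ W)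
    (hWirr : ∀ U : Submodule ℂ W,
      (∀ (x : Matrix (Fin d) (Fin d) ℂ), ∀ w ∈ U, E x w ∈ U) → U = ⊥ ∨ U = ⊤)
    (μ : Ad d →ₐ[ℂ] Module.End ℂ (W ⊗[ℂ] Ad d))
    (ρ : Derivation ℂ (Ad d) (Ad d) →ₗ⁅ℂ⁆ Module.End ℂ (W ⊗[ℂ] Ad d))
    (hμ : ∀ (r m : Fin d → ℤ) (v : W),
      μ (tm r) (v ⊗ₜ[ℂ] tm m) = v ⊗ₜ[ℂ] tm (m + r))
    (hρ : ∀ (u : Fin d → ℂ) (r : Fin d → ℤ) (D : Derivation ℂ (Ad d) (Ad d)),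
      IsD u r D → ∀ (m : Fin d → ℤ) (v : W),
        ρ D (v ⊗ₜ[ℂ] tm m)
          = (∑ i, u i * ((m i : ℂ) + α i)) • (v ⊗ₜ[ℂ] tm (m + r))
            + ((∑ i, ∑ j, (u i * (r j : ℂ)) •
                E (Matrix.single j i (1 : ℂ))) v) ⊗ₜ[ℂ] tm (m + r))
    (hcompat : ∀ (D : Derivation ℂ (Ad d) (Ad d)) (a : Ad d),
      ρ D * μ a - μ a * ρ D = μ (D a)) :
    ∀ M : Submodule ℂ (W ⊗[ℂ] Ad d), M ≠ ⊥ →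
      (∀ (r : Fin d → ℤ), ∀ x ∈ M, μ (tm r) x ∈ M) →
      (∀ (u : Fin d → ℂ) (r : Fin d → ℤ) (D : Derivation ℂ (Ad d) (Ad d)),
        IsD u r D → ∀ x ∈ M, ρ D x ∈ M) →
      M = ⊤ := by
  intro M hMne hMμ hMρ
  classical
  let e : (W ⊗[ℂ] Ad d) ≃ₗ[ℂ] ((Fin d → ℤ) →₀ W) :=
    (TensorProduct.congr (LinearEquiv.refl ℂ W) (AddMonoidAlgebra.coeffLinearEquiv ℂ)).trans
      (TensorProduct.finsuppScalarRight ℂ ℂ W (Fin d → ℤ))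
  have he_symm : ∀ (m : Fin d → ℤ) (v : W), e.symm (Finsupp.single m v) = v ⊗ₜ[ℂ] tm m :=
    fun m v => by simp [e, tm, TensorProduct.finsuppScalarRight_symm_apply_single]
  have he : ∀ (m : Fin d → ℤ) (v : W), e (v ⊗ₜ[ℂ] tm m) = Finsupp.single m v := by
    intro m v
    rw [← he_symm m v, LinearEquiv.apply_symm_apply]
  have hdec : ∀ x : W ⊗[ℂ] Ad d, x = ∑ s ∈ (e x).support, (e x s) ⊗ₜ[ℂ] tm s := by
    intro x
    conv_lhs => rw [← e.symm_apply_apply x, ← Finsupp.sum_single (e x)]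
    rw [Finsupp.sum, map_sum]
    exact Finset.sum_congr rfl fun s _ => he_symm s (e x s)
  have hshift : ∀ (v : W) (m m' : Fin d → ℤ), v ⊗ₜ[ℂ] tm m ∈ M → v ⊗ₜ[ℂ] tm m' ∈ M := by
    intro v m m' h
    have h2 := hMμ (m' - m) _ h
    rw [hμ (m' - m) m v] at h2
    rwa [show m + (m' - m) = m' from by ring] at h2
  have hdiag : ∀ (u : Fin d → ℂ) (m : Fin d → ℤ) (v : W),
      ρ (Dur u 0) (v ⊗ₜ[ℂ] tm m)
        = (∑ i, u i * ((m i : ℂ) + α i)) • (v ⊗ₜ[ℂ] tm m) := by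
    intro u m v
    rw [hρ u 0 (Dur u 0) (isD_Dur u 0) m v]
    simp
  -- find a nonzero pure tensor in M
  have key : ∀ (n : ℕ) (x : W ⊗[ℂ] Ad d), x ∈ M → x ≠ 0 → (e x).support.card ≤ n →
      ∃ v : W, v ≠ 0 ∧ ∃ m, v ⊗ₜ[ℂ] tm m ∈ M := by
    intro n
    induction n with
    | zero =>
      intro x _ hx0 hcard
      exfalso
      apply hx0
      apply e.map_eq_zero_iff.mp
      rw [← Finsupp.support_eq_empty]
      exact Finset.card_eq_zero.mp (Nat.le_zero.mp hcard)
    | succ n ih =>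
      intro x hxM hx0 hcard
      by_cases h1 : (e x).support.card ≤ n
      · exact ih x hxM hx0 h1
      have hc : (e x).support.card = n + 1 := le_antisymm hcard (not_le.mp h1)
      by_cases h2 : (e x).support.card = 1
      · obtain ⟨m, hm⟩ := Finset.card_eq_one.mp h2
        refine ⟨e x m, ?_, m, ?_⟩
        · exact Finsupp.mem_support_iff.mp (hm ▸ Finset.mem_singleton_self m)
        · have hx : x = (e x m) ⊗ₜ[ℂ] tm m := by
            conv_lhs => rw [hdec x]
            rw [hm, Finset.sum_singleton]
          exact hx ▸ hxM
      · have h2' : 1 < (e x).support.card := by omega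
        obtain ⟨m, hm, m', hm', hmm'⟩ := Finset.one_lt_card.mp h2'
        obtain ⟨i, hi⟩ : ∃ i, m i ≠ m' i := by
          by_contra h; push_neg at h; exact hmm' (funext h)
        set u : Fin d → ℂ := Pi.single i 1 with hu
        set c : (Fin d → ℤ) → ℂ := fun s => ∑ j, u j * ((s j : ℂ) + α j) with hcdef
        have hcs : ∀ s : Fin d → ℤ, c s = (s i : ℂ) + α i := by
          intro s
          rw [hcdef]
          simp [hu, Pi.single_apply, ite_mul]
        set y := ρ (Dur u 0) x - c m' • x with hy
        have hyM : y ∈ M :=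
          sub_mem (hMρ u 0 (Dur u 0) (isD_Dur u 0) x hxM) (M.smul_mem _ hxM)
        have hyx : ρ (Dur u 0) x = ∑ s ∈ (e x).support, c s • ((e x s) ⊗ₜ[ℂ] tm s) := by
          conv_lhs => rw [hdec x]
          rw [map_sum]
          exact Finset.sum_congr rfl fun s _ => hdiag u s (e x s)
        have heyt : e y = (∑ s ∈ (e x).support, c s • Finsupp.single s (e x s))
            - c m' • e x := by
          rw [hy, map_sub, map_smul, hyx, map_sum]
          congr 1
          exact Finset.sum_congr rfl fun s _ => by rw [map_smul, he]
        have hey : ∀ t, e y t = (c t - c m') • (e x t) := by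
          intro t
          rw [heyt, Finsupp.sub_apply, Finsupp.smul_apply, Finset.sum_apply']
          by_cases ht : t ∈ (e x).support
          · rw [Finset.sum_eq_single_of_mem t ht
              (fun s _ hst => by rw [Finsupp.smul_apply, Finsupp.single_eq_of_ne' hst, smul_zero])]
            rw [Finsupp.smul_apply, Finsupp.single_eq_same, sub_smul]
          · have hx0t : e x t = 0 := Finsupp.notMem_support_iff.mp ht
            rw [hx0t, smul_zero, smul_zero, sub_zero]
            exact Finset.sum_eq_zero fun s hs => by
              rw [Finsupp.smul_apply, Finsupp.single_eq_of_ne' (by rintro rfl; exact ht hs),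
                smul_zero]
        have hcm : c m - c m' ≠ 0 := by
          rw [hcs, hcs]
          have : (m i : ℂ) ≠ (m' i : ℂ) := fun h => hi (by exact_mod_cast h)
          intro h
          apply this
          have : (m i : ℂ) + α i = (m' i : ℂ) + α i := by
            have := sub_eq_zero.mp h
            linear_combination this
          linear_combination this
        have hy0 : y ≠ 0 := by
          intro h0
          have h3 := hey m
          rw [h0, map_zero, Finsupp.zero_apply] at h3
          have hne2 : e x m ≠ 0 := Finsupp.mem_support_iff.mp hm
          exact hne2 ((smul_eq_zero.mp h3.symm).resolve_left hcm)
        have hsupp : (e y).support ⊆ (e x).support.erase m' := by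
          intro t ht
          rw [Finsupp.mem_support_iff, hey] at ht
          rw [Finset.mem_erase, Finsupp.mem_support_iff]
          refine ⟨fun h => ht ?_, fun h => ht (by rw [h, smul_zero])⟩
          rw [h, sub_self, zero_smul]
        have hcard' : (e y).support.card ≤ n := by
          have hle := Finset.card_le_card hsupp
          have her := Finset.card_erase_of_mem hm'
          omega
        exact ih y hyM hy0 hcard'
  obtain ⟨x, hxM, hx0⟩ := (Submodule.ne_bot_iff M).mp hMne
  obtain ⟨v, hv0, m0, hvM⟩ := key ((e x).support.card) x hxM hx0 le_rfl
  -- the submodule of W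
  let f0 : W →ₗ[ℂ] (W ⊗[ℂ] Ad d) := (TensorProduct.mk ℂ W (Ad d)).flip (tm 0)
  let U : Submodule ℂ W := M.comap f0
  have hUmem : ∀ w : W, w ∈ U ↔ w ⊗ₜ[ℂ] tm 0 ∈ M := fun w => Iff.rfl
  have helem : ∀ (i j : Fin d), ∀ w ∈ U, E (Matrix.single j i 1) w ∈ U := by
    intro i j w hw
    rw [hUmem] at hw
    set u : Fin d → ℂ := Pi.single i 1 with hu
    set r : Fin d → ℤ := Pi.single j 1 with hr
    have h2 := hMρ u r (Dur u r) (isD_Dur u r) _ hw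
    rw [hρ u r (Dur u r) (isD_Dur u r) 0 w] at h2
    have h3 : (∑ i', u i' * (((0 : Fin d → ℤ) i' : ℂ) + α i')) • (w ⊗ₜ[ℂ] tm (0 + r)) ∈ M :=
      M.smul_mem _ (hshift w 0 (0 + r) hw)
    have h4 : ((∑ i', ∑ j', (u i' * (r j' : ℂ)) •
        E (Matrix.single j' i' (1 : ℂ))) w) ⊗ₜ[ℂ] tm (0 + r) ∈ M := by
      have h5 := M.sub_mem h2 h3
      simpa using h5
    have h5 : (∑ i', ∑ j', (u i' * (r j' : ℂ)) • E (Matrix.single j' i' (1 : ℂ)))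
        = E (Matrix.single j i 1) := by
      rw [Finset.sum_eq_single i]
      · rw [Finset.sum_eq_single j]
        · simp [hu, hr]
        · intro b _ hbj
          simp [hr, Pi.single_apply, hbj]
        · simp
      · intro b _ hbi
        apply Finset.sum_eq_zero
        intro b' _
        simp [hu, Pi.single_apply, hbi]
      · simp
    rw [h5] at h4
    exact (hUmem _).mpr (hshift _ _ 0 h4)
  have hUinv : ∀ X : Matrix (Fin d) (Fin d) ℂ, ∀ w ∈ U, E X w ∈ U := by
    intro X w hw
    have hEco : ∀ Y : Matrix (Fin d) (Fin d) ℂ, E Y = E.toLinearMap Y := fun _ => rfl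
    rw [Matrix.matrix_eq_sum_single X, hEco, map_sum,
      LinearMap.coe_sum, Finset.sum_apply]
    apply Submodule.sum_mem
    intro a _
    rw [map_sum, LinearMap.coe_sum, Finset.sum_apply]
    apply Submodule.sum_mem
    intro b _
    have hsb : Matrix.single a b (X a b) = (X a b) • Matrix.single a b 1 := by
      rw [Matrix.smul_single, smul_eq_mul, mul_one]
    rw [hsb, map_smul, LinearMap.smul_apply]
    exact U.smul_mem _ (helem b a w hw)
  have hUtop : U = ⊤ := by
    refine (hWirr U hUinv).resolve_left fun h => ?_
    have hvU : v ∈ U := (hUmem v).mpr (hshift v m0 0 hvM)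
    rw [h] at hvU
    exact hv0 (Submodule.mem_bot ℂ |>.mp hvU)
  rw [eq_top_iff]
  intro z _
  rw [hdec z]
  apply Submodule.sum_mem
  intro s _
  have hz : e z s ∈ U := hUtop ▸ Submodule.mem_top
  exact hshift _ 0 s ((hUmem _).mp hz)
end

section
/- For any (A, Der A)-module V and all u, v ∈ ℂ^d, r, s ∈ ℤ^d, the operators T satisfy the commutator identity [T(v,s), T(u,r)] = (u,s) T(v,s) − (v,r) T(u,r) + T(w, r+s) in End_ℂ(V), where w = (v,r)u − (u,s)v. In particular the ℂ-span of the operators T(u,r) is a Lie subalgebra of End_ℂ(V). -/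
attribute [local instance 100] LieRing.ofAssociativeRing

lemma tm_mul {d : ℕ} (a b : Fin d → ℤ) : tm a * tm b = (tm (a + b) : Ad d) := by
  simp [tm, AddMonoidAlgebra.single_mul_single]

lemma sum_apply_add {d : ℕ} (u : Fin d → ℂ) (r m : Fin d → ℤ) :
    ∑ i, u i * (((r + m) i : ℤ) : ℂ) = (∑ i, u i * (r i : ℂ)) + ∑ i, u i * (m i : ℂ) := by
  rw [← Finset.sum_add_distrib]
  refine Finset.sum_congr rfl fun i _ => ?_
  push_cast [Pi.add_apply]
  ring

lemma isD_unique {d : ℕ} {u : Fin d → ℂ} {r : Fin d → ℤ}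
    {D D' : Derivation ℂ (Ad d) (Ad d)} (h : IsD u r D) (h' : IsD u r D') : D = D' := by
  apply Derivation.ext
  intro a
  induction a using AddMonoidAlgebra.induction_linear with
  | zero => simp
  | add f g hf hg => rw [map_add, map_add, hf, hg]
  | single m c =>
    have hs : (AddMonoidAlgebra.single m c : Ad d) = c • tm m := by
      simp [tm, AddMonoidAlgebra.smul_single]
    rw [hs, Derivation.map_smul, Derivation.map_smul, h m, h' m]

lemma isD_smul {d : ℕ} (c : ℂ) {u : Fin d → ℂ} {r : Fin d → ℤ}
    {D : Derivation ℂ (Ad d) (Ad d)} (h : IsD u r D) : IsD (c • u) r (c • D) := by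
  intro m
  show c • D (tm m) = _
  rw [h m, smul_smul]
  congr 1
  simp [Finset.mul_sum, mul_assoc]

lemma isD_sub {d : ℕ} {u u' : Fin d → ℂ} {r : Fin d → ℤ}
    {D D' : Derivation ℂ (Ad d) (Ad d)} (h : IsD u r D) (h' : IsD u' r D') :
    IsD (u - u') r (D - D') := by
  intro m
  show D (tm m) - D' (tm m) = _
  rw [h m, h' m, ← sub_smul]
  congr 1
  simp [sub_mul, Finset.sum_sub_distrib]

lemma isD_bracket {d : ℕ} {u v : Fin d → ℂ} {r s : Fin d → ℤ}
    {Dvs Dur : Derivation ℂ (Ad d) (Ad d)} (hv : IsD v s Dvs) (hu : IsD u r Dur) :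
    IsD ((∑ i, v i * (r i : ℂ)) • u - (∑ i, u i * (s i : ℂ)) • v) (r + s) ⁅Dvs, Dur⁆ := by
  intro m
  rw [Derivation.commutator_apply, hu m, Derivation.map_smul, hv (r + m), hv m,
    Derivation.map_smul, hu (s + m)]
  have h1 : s + (r + m) = r + s + m := by abel
  have h2 : r + (s + m) = r + s + m := by abel
  rw [h1, h2, smul_smul, smul_smul, ← sub_smul]
  congr 1
  rw [sum_apply_add v r m, sum_apply_add u s m]
  have e3 : ∑ i, ((∑ j, v j * (r j : ℂ)) • u - (∑ j, u j * (s j : ℂ)) • v) i * (m i : ℂ)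
      = (∑ j, v j * (r j : ℂ)) * (∑ i, u i * (m i : ℂ))
        - (∑ j, u j * (s j : ℂ)) * (∑ i, v i * (m i : ℂ)) := by
    simp [sub_mul, Finset.sum_sub_distrib, Finset.mul_sum, mul_assoc]
  rw [e3]
  ring

lemma part1 {d : ℕ} {V : Type*} [AddCommGroup V] [Module ℂ V]
    (μ : Ad d →ₐ[ℂ] Module.End ℂ V)
    (ρ : Derivation ℂ (Ad d) (Ad d) →ₗ⁅ℂ⁆ Module.End ℂ V)
    (hcompat : ∀ (D : Derivation ℂ (Ad d) (Ad d)) (a : Ad d),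
      ρ D * μ a - μ a * ρ D = μ (D a))
    (u v : Fin d → ℂ) (r s : Fin d → ℤ)
    (Dur Du0 Dvs Dv0 Dw Dw0 : Derivation ℂ (Ad d) (Ad d))
    (hur : IsD u r Dur) (hu0 : IsD u 0 Du0) (hvs : IsD v s Dvs) (hv0 : IsD v 0 Dv0)
    (hw : IsD ((∑ i, v i * (r i : ℂ)) • u - (∑ i, u i * (s i : ℂ)) • v) (r + s) Dw)
    (hw0 : IsD ((∑ i, v i * (r i : ℂ)) • u - (∑ i, u i * (s i : ℂ)) • v) 0 Dw0) :
    ⁅μ (tm (-s)) * ρ Dvs - ρ Dv0, μ (tm (-r)) * ρ Dur - ρ Du0⁆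
        = (∑ i, u i * (s i : ℂ)) • (μ (tm (-s)) * ρ Dvs - ρ Dv0)
          - (∑ i, v i * (r i : ℂ)) • (μ (tm (-r)) * ρ Dur - ρ Du0)
          + (μ (tm (-(r + s))) * ρ Dw - ρ Dw0) := by
  set a : ℂ := ∑ i, u i * (s i : ℂ) with ha
  set b : ℂ := ∑ i, v i * (r i : ℂ) with hb
  set P := ρ Dur
  set Q := ρ Du0
  set S := ρ Dvs
  set T := ρ Dv0
  set Es := μ (tm (-s)) with hEs
  set Er := μ (tm (-r)) with hEr
  set Ers := μ (tm (-(r + s))) with hErs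
  set M := μ (tm (s + -r)) with hM
  set N := μ (tm (r + -s)) with hN
  have hcomm : ∀ (D : Derivation ℂ (Ad d) (Ad d)) (x : Ad d),
      ρ D * μ x = μ x * ρ D + μ (D x) := by
    intro D x
    have h := hcompat D x
    rw [← h]; abel
  have sneg : ∀ (w : Fin d → ℂ) (m : Fin d → ℤ),
      ∑ i, w i * (((-m) i : ℤ) : ℂ) = -∑ i, w i * (m i : ℂ) := by
    intro w m
    simp [Pi.neg_apply, mul_neg, Finset.sum_neg_distrib]
  -- commutation relations
  have c1 : P * Es = Es * P - a • N := by
    rw [hEs, hcomm Dur (tm (-s)), hur (-s), map_smul, sneg u s, ← ha, neg_smul, hN]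
    abel
  have c2 : S * Er = Er * S - b • M := by
    rw [hEr, hcomm Dvs (tm (-r)), hvs (-r), map_smul, sneg v r, ← hb, neg_smul, hM]
    abel
  have c3 : Q * Es = Es * Q - a • Es := by
    rw [hEs, hcomm Du0 (tm (-s)), hu0 (-s), map_smul, sneg u s, ← ha, neg_smul, zero_add]
    abel
  have c4 : T * Er = Er * T - b • Er := by
    rw [hEr, hcomm Dv0 (tm (-r)), hv0 (-r), map_smul, sneg v r, ← hb, neg_smul, zero_add]
    abel
  have m1 : ∀ X : Module.End ℂ V, Es * (Er * X) = Ers * X := by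
    intro X
    rw [hEs, hEr, hErs, ← mul_assoc, ← map_mul, tm_mul, show -s + -r = -(r+s) by abel]
  have m2 : ∀ X : Module.End ℂ V, Er * (Es * X) = Ers * X := by
    intro X
    rw [hEs, hEr, hErs, ← mul_assoc, ← map_mul, tm_mul, show -r + -s = -(r+s) by abel]
  have m3 : ∀ X : Module.End ℂ V, Es * (M * X) = Er * X := by
    intro X
    rw [hEs, hEr, hM, ← mul_assoc, ← map_mul, tm_mul, show -s + (s + -r) = -r by abel]
  have m4 : ∀ X : Module.End ℂ V, Er * (N * X) = Es * X := by
    intro X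
    rw [hEs, hEr, hN, ← mul_assoc, ← map_mul, tm_mul, show -r + (r + -s) = -s by abel]
  -- assoc'd commutation relations
  have c1' : ∀ X : Module.End ℂ V, P * (Es * X) = Es * (P * X) - a • (N * X) := by
    intro X; rw [← mul_assoc, c1, sub_mul, smul_mul_assoc, mul_assoc]
  have c2' : ∀ X : Module.End ℂ V, S * (Er * X) = Er * (S * X) - b • (M * X) := by
    intro X; rw [← mul_assoc, c2, sub_mul, smul_mul_assoc, mul_assoc]
  have c3' : ∀ X : Module.End ℂ V, Q * (Es * X) = Es * (Q * X) - a • (Es * X) := by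
    intro X; rw [← mul_assoc, c3, sub_mul, smul_mul_assoc, mul_assoc]
  have c4' : ∀ X : Module.End ℂ V, T * (Er * X) = Er * (T * X) - b • (Er * X) := by
    intro X; rw [← mul_assoc, c4, sub_mul, smul_mul_assoc, mul_assoc]
  -- bracket relations
  have e1 : ρ Dw = S * P - P * S := by
    rw [isD_unique hw (isD_bracket hvs hur), LieHom.map_lie, Ring.lie_def]
  have e2' : S * Q = Q * S - a • S := by
    have h2 : IsD ((-a) • v) s ⁅Dvs, Du0⁆ := by
      have := isD_bracket hvs hu0
      simpa [ha] using this
    have h3 := isD_unique h2 (isD_smul (-a) hvs)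
    have := congrArg ρ h3
    rw [LieHom.map_lie, Ring.lie_def, map_smul] at this
    have := this.symm
    rw [neg_smul] at this
    -- this : -(a • S) = S * Q - Q * S  →  S * Q = Q * S - a • S
    linear_combination (norm := abel) -this
  have e3' : T * P = P * T + b • P := by
    have h2 : IsD (b • u) r ⁅Dv0, Dur⁆ := by
      have := isD_bracket hv0 hur
      simpa [hb] using this
    have h3 := isD_unique h2 (isD_smul b hur)
    have h4 := congrArg ρ h3
    rw [LieHom.map_lie, Ring.lie_def, map_smul] at h4
    linear_combination (norm := abel) h4
  have e4' : T * Q = Q * T := by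
    have hzero : IsD (0 : Fin d → ℂ) 0 (0 : Derivation ℂ (Ad d) (Ad d)) := by
      intro m; simp
    have h2 : IsD (0 : Fin d → ℂ) 0 ⁅Dv0, Du0⁆ := by
      have := isD_bracket hv0 hu0
      simpa using this
    have h3 := isD_unique h2 hzero
    have h4 := congrArg ρ h3
    rw [LieHom.map_lie, Ring.lie_def, map_zero] at h4
    linear_combination (norm := abel) h4
  have e5 : ρ Dw0 = b • Q - a • T := by
    have h2 : IsD (b • u - a • v) 0 (b • Du0 - a • Dv0) :=
      isD_sub (isD_smul b hu0) (isD_smul a hv0)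
    rw [isD_unique hw0 h2, map_sub, map_smul, map_smul]
  rw [Ring.lie_def, e1, e5]
  simp only [mul_sub, sub_mul, mul_assoc, smul_sub, smul_mul_assoc, mul_smul_comm,
    c1', c2', c3', c4', m1, m2, m3, m4, e2', e3', e4', mul_add, add_mul, smul_add, smul_smul]
  module

/-- For any `(A, Der A)`-module `(V, μ, ρ)` the operators
`T(u,r) = μ(t^{-r})∘ρ(D(u,r)) − ρ(D(u,0))` satisfy
`[T(v,s), T(u,r)] = (u,s) T(v,s) − (v,r) T(u,r) + T(w, r+s)` with `w = (v,r)u − (u,s)v`;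
in particular the `ℂ`-span of the operators `T(u,r)` is a Lie subalgebra of `End_ℂ(V)`. -/
theorem T_commutator_identity (d : ℕ) (hd : 2 ≤ d)
    (V : Type*) [AddCommGroup V] [Module ℂ V]
    (μ : Ad d →ₐ[ℂ] Module.End ℂ V)
    (ρ : Derivation ℂ (Ad d) (Ad d) →ₗ⁅ℂ⁆ Module.End ℂ V)
    (hcompat : ∀ (D : Derivation ℂ (Ad d) (Ad d)) (a : Ad d),
      ρ D * μ a - μ a * ρ D = μ (D a)) :
    (∀ (u v : Fin d → ℂ) (r s : Fin d → ℤ)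
      (Dur Du0 Dvs Dv0 Dw Dw0 : Derivation ℂ (Ad d) (Ad d)),
      IsD u r Dur → IsD u 0 Du0 → IsD v s Dvs → IsD v 0 Dv0 →
      IsD ((∑ i, v i * (r i : ℂ)) • u - (∑ i, u i * (s i : ℂ)) • v) (r + s) Dw →
      IsD ((∑ i, v i * (r i : ℂ)) • u - (∑ i, u i * (s i : ℂ)) • v) 0 Dw0 →
      ⁅μ (tm (-s)) * ρ Dvs - ρ Dv0, μ (tm (-r)) * ρ Dur - ρ Du0⁆
        = (∑ i, u i * (s i : ℂ)) • (μ (tm (-s)) * ρ Dvs - ρ Dv0)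
          - (∑ i, v i * (r i : ℂ)) • (μ (tm (-r)) * ρ Dur - ρ Du0)
          + (μ (tm (-(r + s))) * ρ Dw - ρ Dw0)) ∧
    (∀ x y : Module.End ℂ V,
      x ∈ Submodule.span ℂ {f : Module.End ℂ V |
        ∃ (u : Fin d → ℂ) (r : Fin d → ℤ) (D D0 : Derivation ℂ (Ad d) (Ad d)),
          IsD u r D ∧ IsD u 0 D0 ∧ f = μ (tm (-r)) * ρ D - ρ D0} →
      y ∈ Submodule.span ℂ {f : Module.End ℂ V |
        ∃ (u : Fin d → ℂ) (r : Fin d → ℤ) (D D0 : Derivation ℂ (Ad d) (Ad d)),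
          IsD u r D ∧ IsD u 0 D0 ∧ f = μ (tm (-r)) * ρ D - ρ D0} →
      ⁅x, y⁆ ∈ Submodule.span ℂ {f : Module.End ℂ V |
        ∃ (u : Fin d → ℂ) (r : Fin d → ℤ) (D D0 : Derivation ℂ (Ad d) (Ad d)),
          IsD u r D ∧ IsD u 0 D0 ∧ f = μ (tm (-r)) * ρ D - ρ D0}) := by
  constructor
  · intro u v r s Dur Du0 Dvs Dv0 Dw Dw0 hur hu0 hvs hv0 hw hw0
    exact part1 μ ρ hcompat u v r s Dur Du0 Dvs Dv0 Dw Dw0 hur hu0 hvs hv0 hw hw0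
  · intro x y hx hy
    induction hx using Submodule.span_induction with
    | mem f hf =>
      induction hy using Submodule.span_induction with
      | mem g hg =>
        obtain ⟨uf, rf, Df, Df0, hDf, hDf0, rfl⟩ := hf
        obtain ⟨ug, rg, Dg, Dg0, hDg, hDg0, rfl⟩ := hg
        have hw := isD_bracket hDf hDg
        have hw0 : IsD ((∑ i, uf i * (rg i : ℂ)) • ug - (∑ i, ug i * (rf i : ℂ)) • uf) 0
            ((∑ i, uf i * (rg i : ℂ)) • Dg0 - (∑ i, ug i * (rf i : ℂ)) • Df0) :=
          isD_sub (isD_smul _ hDg0) (isD_smul _ hDf0)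
        have key := part1 μ ρ hcompat ug uf rg rf Dg Dg0 Df Df0 ⁅Df, Dg⁆
          ((∑ i, uf i * (rg i : ℂ)) • Dg0 - (∑ i, ug i * (rf i : ℂ)) • Df0)
          hDg hDg0 hDf hDf0 hw hw0
        rw [key]
        refine add_mem (sub_mem (Submodule.smul_mem _ _ ?_) (Submodule.smul_mem _ _ ?_))
          (Submodule.subset_span ?_)
        · exact Submodule.subset_span ⟨uf, rf, Df, Df0, hDf, hDf0, rfl⟩
        · exact Submodule.subset_span ⟨ug, rg, Dg, Dg0, hDg, hDg0, rfl⟩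
        · exact ⟨_, rg + rf, ⁅Df, Dg⁆, _, hw, hw0, rfl⟩
      | zero => rw [lie_zero]; exact zero_mem _
      | add y1 y2 _ _ ih1 ih2 => rw [lie_add]; exact add_mem ih1 ih2
      | smul c y1 _ ih => rw [lie_smul]; exact Submodule.smul_mem _ _ ih
    | zero => rw [zero_lie]; exact zero_mem _
    | add x1 x2 _ _ ih1 ih2 => rw [add_lie]; exact add_mem ih1 ih2
    | smul c x1 _ ih => rw [smul_lie]; exact Submodule.smul_mem _ _ ih
end

section
/- For any (A, Der A)-module V, the operator T(u,r) commutes with ρ(D(v,0)) for all u, v ∈ ℂ^d and r ∈ ℤ^d. Consequently, for any α ∈ ℂ^d and any m ∈ ℤ^d, the weight space V_m is invariant under every operator T(u,r). -/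
attribute [local instance] LieRing.ofAssociativeRing

/-- The weight space `V_m = {v ∈ V : ρ(D(u,0)) v = (u, m+α) v for all u ∈ ℂ^d}`. -/
noncomputable def wtSp {d : ℕ} {V : Type*} [AddCommGroup V] [Module ℂ V]
    (ρ : Derivation ℂ (Ad d) (Ad d) →ₗ⁅ℂ⁆ Module.End ℂ V)
    (α : Fin d → ℂ) (m : Fin d → ℤ) : Submodule ℂ V :=
  ⨅ (u : Fin d → ℂ) (D : Derivation ℂ (Ad d) (Ad d)) (_ : IsD u 0 D),
    LinearMap.ker (ρ D - (∑ i, u i * ((m i : ℂ) + α i)) • (1 : Module.End ℂ V))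

lemma deriv_ext {d : ℕ} {D1 D2 : Derivation ℂ (Ad d) (Ad d)}
    (h : ∀ s, D1 (tm s) = D2 (tm s)) : D1 = D2 := by
  apply Derivation.ext
  intro a
  induction a using AddMonoidAlgebra.induction_linear with
  | zero => simp
  | add f g hf hg => simp [hf, hg]
  | single s b =>
      have : (AddMonoidAlgebra.single s b : Ad d) = b • tm s := by
        simp [tm, AddMonoidAlgebra.smul_single']
      rw [this, Derivation.map_smul, Derivation.map_smul, h]

lemma bracket_eq {d : ℕ} {u v : Fin d → ℂ} {r : Fin d → ℤ}
    {D Dv0 : Derivation ℂ (Ad d) (Ad d)} (hD : IsD u r D) (hv : IsD v 0 Dv0) :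
    ⁅Dv0, D⁆ = (∑ i, v i * (r i : ℂ)) • D := by
  unfold IsD at hD hv
  apply deriv_ext
  intro s
  simp only [Derivation.commutator_apply, Derivation.smul_apply, hD, hv,
    Derivation.map_smul, zero_add, smul_smul]
  rw [← sub_smul]
  congr 1
  simp only [Pi.add_apply, Int.cast_add, mul_add, Finset.sum_add_distrib]
  ring

lemma comm_lemma {d : ℕ} {V : Type*} [AddCommGroup V] [Module ℂ V]
    (μ : Ad d →ₐ[ℂ] Module.End ℂ V)
    (ρ : Derivation ℂ (Ad d) (Ad d) →ₗ⁅ℂ⁆ Module.End ℂ V)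
    (hcompat : ∀ (D : Derivation ℂ (Ad d) (Ad d)) (a : Ad d),
      ρ D * μ a - μ a * ρ D = μ (D a))
    (u v : Fin d → ℂ) (r : Fin d → ℤ) (D D0 Dv0 : Derivation ℂ (Ad d) (Ad d))
    (hD : IsD u r D) (hD0 : IsD u 0 D0) (hv : IsD v 0 Dv0) :
    (μ (tm (-r)) * ρ D - ρ D0) * ρ Dv0 = ρ Dv0 * (μ (tm (-r)) * ρ D - ρ D0) := by
  set a := μ (tm (-r)) with ha
  set X := ρ D with hX
  set Y := ρ D0 with hY
  set Z := ρ Dv0 with hZ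
  set c : ℂ := ∑ i, v i * (r i : ℂ) with hc
  have hZX : Z * X - X * Z = c • X := by
    rw [hX, hZ, ← Ring.lie_def, ← LieHom.map_lie, bracket_eq hD hv, map_smul]
  have hZY : Z * Y = Y * Z := by
    have : Z * Y - Y * Z = (0 : ℂ) • Y := by
      rw [hY, hZ, ← Ring.lie_def, ← LieHom.map_lie, bracket_eq hD0 hv, map_smul]
      congr 1
      simp
    rw [zero_smul, sub_eq_zero] at this
    exact this
  have hZa : Z * a = a * Z - c • a := by
    have h := hcompat Dv0 (tm (-r))
    rw [hv (-r)] at h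
    rw [map_smul] at h
    have hsum : (∑ i, v i * ((-r) i : ℂ)) = -c := by
      rw [hc, ← Finset.sum_neg_distrib]
      congr 1; funext i; rw [Pi.neg_apply, Int.cast_neg]; ring
    rw [hsum, zero_add, ← ha, ← hZ, neg_smul] at h
    rw [eq_add_of_sub_eq h]
    abel
  have h2 : Z * X = X * Z + c • X := (eq_add_of_sub_eq hZX).trans (add_comm _ _)
  have key : Z * (a * X) = (a * X) * Z := by
    calc Z * (a * X) = (Z * a) * X := by rw [mul_assoc]
      _ = (a * Z - c • a) * X := by rw [hZa]
      _ = a * (Z * X) - c • (a * X) := by rw [sub_mul, smul_mul_assoc, mul_assoc]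
      _ = a * (X * Z) + c • (a * X) - c • (a * X) := by
          rw [h2, mul_add, mul_smul_comm]
      _ = (a * X) * Z := by rw [add_sub_cancel_right, mul_assoc]
  rw [sub_mul, mul_sub, key, hZY]

/-- For any `(A, Der A)`-module `(V, μ, ρ)`, the operator
`T(u,r) = μ(t^{-r})∘ρ(D(u,r)) − ρ(D(u,0))` commutes with `ρ(D(v,0))` for all
`u, v ∈ ℂ^d`, `r ∈ ℤ^d`; consequently, for any `α ∈ ℂ^d` and `m ∈ ℤ^d` the weight
space `V_m` is invariant under every `T(u,r)`. -/
theorem T_commutes_with_Cartan_and_preserves_weight_spaces (d : ℕ) (hd : 2 ≤ d)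
    (V : Type*) [AddCommGroup V] [Module ℂ V]
    (μ : Ad d →ₐ[ℂ] Module.End ℂ V)
    (ρ : Derivation ℂ (Ad d) (Ad d) →ₗ⁅ℂ⁆ Module.End ℂ V)
    (hcompat : ∀ (D : Derivation ℂ (Ad d) (Ad d)) (a : Ad d),
      ρ D * μ a - μ a * ρ D = μ (D a)) :
    (∀ (u v : Fin d → ℂ) (r : Fin d → ℤ) (D D0 Dv0 : Derivation ℂ (Ad d) (Ad d)),
      IsD u r D → IsD u 0 D0 → IsD v 0 Dv0 →
      (μ (tm (-r)) * ρ D - ρ D0) * ρ Dv0 = ρ Dv0 * (μ (tm (-r)) * ρ D - ρ D0)) ∧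
    (∀ (α : Fin d → ℂ) (m : Fin d → ℤ) (u : Fin d → ℂ) (r : Fin d → ℤ)
      (D D0 : Derivation ℂ (Ad d) (Ad d)),
      IsD u r D → IsD u 0 D0 →
      ∀ v ∈ wtSp ρ α m, (μ (tm (-r)) * ρ D - ρ D0) v ∈ wtSp ρ α m) := by
  refine ⟨fun u v r D D0 Dv0 hD hD0 hv => comm_lemma μ ρ hcompat u v r D D0 Dv0 hD hD0 hv, ?_⟩
  intro α m u r D D0 hD hD0 x hx
  simp only [wtSp, Submodule.mem_iInf, LinearMap.mem_ker] at hx ⊢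
  intro w Dw hw
  have hcomm := comm_lemma μ ρ hcompat u w r D D0 Dw hD hD0 hw
  have hx' := hx w Dw hw
  set T := μ (tm (-r)) * ρ D - ρ D0 with hT
  set cw : ℂ := ∑ i, w i * ((m i : ℂ) + α i) with hcw
  have hρx : ρ Dw x = cw • x := by
    have := hx'
    simp only [LinearMap.sub_apply, LinearMap.smul_apply, Module.End.one_apply] at this
    exact sub_eq_zero.mp this
  have : ρ Dw (T x) = cw • (T x) := by
    have happ : ρ Dw (T x) = (ρ Dw * T) x := rfl
    rw [happ, ← hcomm]
    show T (ρ Dw x) = cw • T x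
    rw [hρx, map_smul]
  simp only [LinearMap.sub_apply, LinearMap.smul_apply, Module.End.one_apply, this, sub_self]
end

section
/- For every integer k ≥ 1, the subspace I_k is a Lie ideal of 𝔗, i.e. [x, y] ∈ I_k for all x ∈ 𝔗 and y ∈ I_k; moreover I_k ⊆ I_{k−1} for every k ≥ 2. -/
/-- `T_k(u,r,m₁,…,m_k) = ∑_{S ⊆ {1,…,k}} (−1)^{|S|} T(u, r + ∑_{i∈S} mᵢ)`. -/
noncomputable def Tk {d : ℕ} {L : Type*} [AddCommGroup L] [Module ℂ L]
    (T : (Fin d → ℂ) → (Fin d → ℤ) → L) (k : ℕ)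
    (u : Fin d → ℂ) (r : Fin d → ℤ) (m : Fin k → Fin d → ℤ) : L :=
  ∑ S : Finset (Fin k), ((-1 : ℂ) ^ S.card) • T u (r + ∑ i ∈ S, m i)

/-- `I_k`, the `ℂ`-linear span of all `T_k(u,r,m₁,…,m_k)` with `u ∈ ℂ^d` and
`r, m₁,…,m_k ∈ ℤ^d`. -/
noncomputable def Ik {d : ℕ} {L : Type*} [AddCommGroup L] [Module ℂ L]
    (T : (Fin d → ℂ) → (Fin d → ℤ) → L) (k : ℕ) : Submodule ℂ L :=
  Submodule.span ℂ
    {x : L | ∃ (u : Fin d → ℂ) (r : Fin d → ℤ) (m : Fin k → Fin d → ℤ),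
      x = Tk T k u r m}

/-!
`finDiff f m r` is the iterated difference `∇_{m₁} ⋯ ∇_{mₖ} f` at `r`, where
`∇_a f x = f x - f (x + a)`. Thus `T_k(u, r, m) = finDiff (T u) m r`, and
`∇_a = 1 - (translation by a)` gives `I_{k+1} ⊆ I_k`.

As a function of `x`, `⁅T(v,s), T(u,x)⁆` is a constant, minus `(v,x) • ∇_s (T u) x`, minus a
translate of `(u,s) • T v`. A `k`-th difference with `k ≥ 1` kills the constant. For the middle
term use the discrete Leibniz rule `∇_a (ℓ • g) = ℓ • ∇_a g - ℓ a • g (· + a)` for additive `ℓ`: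
by induction, if all `k`-th and `(k+1)`-st differences of `g` lie in a submodule, so do all
`(k+1)`-st differences of `ℓ • g`. For `g = ∇_s (T u)` these are `(k+1)`-st and `(k+2)`-nd
differences of `T u`, which lie in `I_{k+1}` because `I_{k+2} ⊆ I_{k+1}`. So `ad T(v,s)` preserves
`I_{k+1}`, and the `T(eᵢ, s)` span the algebra.
-/

open Finset

section FiniteDifference

variable {G M : Type*} [AddCommGroup G] [AddCommGroup M] {k : ℕ}

def finDiff (f : G → M) (m : Fin k → G) (r : G) : M :=
  ∑ S : Finset (Fin k), (-1 : ℤ) ^ #S • f (r + ∑ i ∈ S, m i)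

@[simp]
lemma finDiff_zero (f : G → M) (m : Fin 0 → G) (r : G) : finDiff f m r = f r := by
  simp [finDiff, Subsingleton.elim _ (∅ : Finset (Fin 0))]

lemma finDiff_cons (f : G → M) (a : G) (m : Fin k → G) (r : G) :
    finDiff f (Fin.cons a m) r = finDiff (fun x => f x - f (x + a)) m r := by
  have huniv : (univ : Finset (Fin (k + 1))) = insert 0 (univ.image Fin.succ) := by
    simp [insert_compl_self]
  have hinj :
      Set.InjOn (fun S : Finset (Fin k) => S.image Fin.succ) (univ : Finset (Fin k)).powerset :=
    image_injOn_powerset_of_injOn (Fin.succ_injective _).injOn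
  unfold finDiff
  rw [← powerset_univ, huniv, sum_powerset_insert (by simp), powerset_image, sum_image hinj,
    sum_image hinj, ← sum_add_distrib, powerset_univ]
  refine sum_congr rfl fun S _ => ?_
  have h0 : (0 : Fin (k + 1)) ∉ S.image Fin.succ := by simp [Fin.succ_ne_zero]
  rw [card_insert_of_notMem h0, sum_insert h0, card_image_of_injective _ (Fin.succ_injective _),
    sum_image (Fin.succ_injective _).injOn]
  simp only [Fin.cons_zero, Fin.cons_succ, pow_succ, smul_sub]
  rw [add_left_comm, add_comm a]
  module

lemma finDiff_sub (f g : G → M) (m : Fin k → G) (r : G) :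
    finDiff (fun x => f x - g x) m r = finDiff f m r - finDiff g m r := by
  simp only [finDiff, smul_sub, sum_sub_distrib]

lemma finDiff_comp_add_right (f : G → M) (a : G) (m : Fin k → G) (r : G) :
    finDiff (fun x => f (x + a)) m r = finDiff f m (r + a) := by
  simp only [finDiff, add_right_comm]

lemma finDiff_cons_eq_sub (f : G → M) (a : G) (m : Fin k → G) (r : G) :
    finDiff f (Fin.cons a m) r = finDiff f m r - finDiff f m (r + a) := by
  rw [finDiff_cons, finDiff_sub, finDiff_comp_add_right]

lemma finDiff_const (c : M) (m : Fin (k + 1) → G) (r : G) : finDiff (fun _ => c) m r = 0 := by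
  rw [← Fin.cons_self_tail m, finDiff_cons]
  simp [finDiff]

lemma map_finDiff {M' : Type*} [AddCommGroup M'] (φ : M →+ M') (f : G → M) (m : Fin k → G)
    (r : G) : φ (finDiff f m r) = finDiff (fun x => φ (f x)) m r := by
  simp [finDiff, map_sum, map_zsmul]

variable {R : Type*} [Ring R] [Module R M]

lemma finDiff_const_smul (c : R) (f : G → M) (m : Fin k → G) (r : G) :
    finDiff (fun x => c • f x) m r = c • finDiff f m r :=
  (map_finDiff (DistribSMul.toAddMonoidHom M c) f m r).symm

lemma finDiff_smul_cons (ℓ : G →+ R) (g : G → M) (a : G) (m : Fin k → G) (r : G) :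
    finDiff (fun x => ℓ x • g x) (Fin.cons a m) r
      = finDiff (fun x => ℓ x • (g x - g (x + a))) m r - ℓ a • finDiff g m (r + a) := by
  rw [finDiff_cons, ← finDiff_const_smul, ← finDiff_comp_add_right, ← finDiff_sub]
  congr 1
  ext x
  rw [map_add, add_smul, smul_sub]
  abel

lemma finDiff_smul_mem (ℓ : G →+ R) (N : Submodule R M) (k : ℕ) (g : G → M)
    (h₀ : ∀ (m : Fin k → G) r, finDiff g m r ∈ N)
    (h₁ : ∀ (m : Fin (k + 1) → G) r, finDiff g m r ∈ N)
    (m : Fin (k + 1) → G) (r : G) : finDiff (fun x => ℓ x • g x) m r ∈ N := by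
  have h₁' (m' : Fin k → G) (r' : G) :
      finDiff (fun x => g x - g (x + m 0)) m' r' ∈ N := by
    simpa only [finDiff_cons] using h₁ (Fin.cons (m 0) m') r'
  rw [← Fin.cons_self_tail m, finDiff_smul_cons]
  refine sub_mem ?_ (N.smul_mem _ (h₀ _ _))
  cases k with
  | zero => simpa only [finDiff_zero] using N.smul_mem (ℓ r) (h₁' (Fin.tail m) r)
  | succ k =>
    refine finDiff_smul_mem ℓ N k _ (fun m' r' => ?_) h₁' _ r
    simpa only [finDiff_cons] using h₀ (Fin.cons (m 0) m') r'

end FiniteDifference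

section LieIdeal

variable {d : ℕ} {L : Type*} [LieRing L] [LieAlgebra ℂ L]
variable (T : (Fin d → ℂ) → (Fin d → ℤ) → L)

lemma Tk_eq_finDiff (k : ℕ) (u : Fin d → ℂ) (r : Fin d → ℤ) (m : Fin k → Fin d → ℤ) :
    Tk T k u r m = finDiff (T u) m r := by
  simp only [Tk, finDiff, ← Int.cast_smul_eq_zsmul ℂ, Int.cast_pow, Int.cast_neg,
    Int.cast_one]

lemma finDiff_mem_Ik {k : ℕ} (u : Fin d → ℂ) (m : Fin k → Fin d → ℤ) (r : Fin d → ℤ) :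
    finDiff (T u) m r ∈ Ik T k :=
  Tk_eq_finDiff T k u r m ▸ Submodule.subset_span ⟨u, r, m, rfl⟩

lemma Ik_succ_le (k : ℕ) : Ik T (k + 1) ≤ Ik T k := by
  refine Submodule.span_le.2 ?_
  rintro _ ⟨u, r, m, rfl⟩
  rw [SetLike.mem_coe, Tk_eq_finDiff, ← Fin.cons_self_tail m, finDiff_cons_eq_sub]
  exact sub_mem (finDiff_mem_Ik T u _ r) (finDiff_mem_Ik T u _ _)

variable {T}

lemma lie_T_finDiff_mem_Ik (hlin : ∀ r : Fin d → ℤ, IsLinearMap ℂ (fun u => T u r))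
    (hbr : ∀ (u v : Fin d → ℂ) (r s : Fin d → ℤ),
      ⁅T v s, T u r⁆
        = (∑ i, u i * (s i : ℂ)) • T v s - (∑ i, v i * (r i : ℂ)) • T u r
          + T ((∑ i, v i * (r i : ℂ)) • u - (∑ i, u i * (s i : ℂ)) • v) (r + s))
    {k : ℕ} (v u : Fin d → ℂ) (s : Fin d → ℤ) (m : Fin (k + 1) → Fin d → ℤ)
    (r : Fin d → ℤ) :
    ⁅T v s, finDiff (T u) m r⁆ ∈ Ik T (k + 1) := by
  let ℓ : (Fin d → ℤ) →+ ℂ :=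
    AddMonoidHom.mk' (fun x => ∑ i, v i * (x i : ℂ)) fun x y => by
      simp [mul_add, sum_add_distrib]
  set c := ∑ i, u i * (s i : ℂ)
  have hexpand (x : Fin d → ℤ) :
      ⁅T v s, T u x⁆ = c • T v s - ℓ x • (T u x - T u (x + s)) - c • T v (x + s) := by
    rw [hbr, (hlin _).map_sub, (hlin _).map_smul, (hlin _).map_smul]
    simp only [ℓ, AddMonoidHom.mk'_apply]
    module
  have hlie : ⁅T v s, finDiff (T u) m r⁆ = finDiff (fun x => ⁅T v s, T u x⁆) m r :=
    map_finDiff (AddMonoidHom.mk' (⁅T v s, ·⁆) (lie_add _)) _ _ _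
  simp only [hlie, hexpand]
  rw [finDiff_sub, finDiff_sub, finDiff_const, zero_sub, finDiff_const_smul,
    finDiff_comp_add_right]
  refine sub_mem
    (neg_mem (finDiff_smul_mem ℓ _ k _ (fun m' r' => ?_) (fun m' r' => ?_) m r))
    (Submodule.smul_mem _ _ (finDiff_mem_Ik T v m _))
  · rw [← finDiff_cons]
    exact finDiff_mem_Ik T u _ r'
  · rw [← finDiff_cons]
    exact Ik_succ_le T _ (finDiff_mem_Ik T u _ r')

lemma lie_mem_Ik (hlin : ∀ r : Fin d → ℤ, IsLinearMap ℂ (fun u => T u r))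
    (hspan : Submodule.span ℂ
      (Set.range fun p : Fin d × {r : Fin d → ℤ // r ≠ 0} =>
        T (Pi.single p.1 1) p.2.1) = ⊤)
    (hbr : ∀ (u v : Fin d → ℂ) (r s : Fin d → ℤ),
      ⁅T v s, T u r⁆
        = (∑ i, u i * (s i : ℂ)) • T v s - (∑ i, v i * (r i : ℂ)) • T u r
          + T ((∑ i, v i * (r i : ℂ)) • u - (∑ i, u i * (s i : ℂ)) • v) (r + s))
    {k : ℕ} (x : L) {y : L} (hy : y ∈ Ik T (k + 1)) : ⁅x, y⁆ ∈ Ik T (k + 1) := by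
  set I := Ik T (k + 1)
  have hT (v : Fin d → ℂ) (s : Fin d → ℤ) :
      LieAlgebra.ad ℂ L (T v s) ∈ I.compatibleMaps I := by
    refine Submodule.span_le.2 ?_
    rintro _ ⟨u, r, m, rfl⟩
    simpa [Tk_eq_finDiff] using lie_T_finDiff_mem_Ik hlin hbr v u s m r
  have hx :
      ⊤ ≤ (I.compatibleMaps I).comap (LieAlgebra.ad ℂ L : L →ₗ[ℂ] Module.End ℂ L) := by
    rw [← hspan, Submodule.span_le]
    rintro _ ⟨p, rfl⟩
    exact hT _ _
  exact hx Submodule.mem_top hy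

end LieIdeal

theorem Ik_is_ideal_and_decreasing_general (d : ℕ)
    (L : Type*) [LieRing L] [LieAlgebra ℂ L]
    (T : (Fin d → ℂ) → (Fin d → ℤ) → L)
    (hlin : ∀ r : Fin d → ℤ, IsLinearMap ℂ (fun u => T u r))
    (hspan : Submodule.span ℂ
      (Set.range fun p : Fin d × {r : Fin d → ℤ // r ≠ 0} =>
        T (Pi.single p.1 1) p.2.1) = ⊤)
    (hbr : ∀ (u v : Fin d → ℂ) (r s : Fin d → ℤ),
      ⁅T v s, T u r⁆
        = (∑ i, u i * (s i : ℂ)) • T v s - (∑ i, v i * (r i : ℂ)) • T u r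
          + T ((∑ i, v i * (r i : ℂ)) • u - (∑ i, u i * (s i : ℂ)) • v) (r + s))
    (k : ℕ) (hk : 1 ≤ k) :
    (∀ (x : L), ∀ y ∈ Ik T k, ⁅x, y⁆ ∈ Ik T k) ∧
    (2 ≤ k → Ik T k ≤ Ik T (k - 1)) := by
  obtain ⟨n, rfl⟩ := Nat.exists_eq_add_of_le' hk
  exact ⟨fun x _ hy => lie_mem_Ik hlin hspan hbr x hy, fun _ => Ik_succ_le T n⟩

/-- For every `k ≥ 1`, `I_k` is a Lie ideal of `𝔗`, and `I_k ⊆ I_{k−1}` for `k ≥ 2`. -/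
theorem Ik_is_ideal_and_decreasing (d : ℕ) (hd : 2 ≤ d)
    (L : Type*) [LieRing L] [LieAlgebra ℂ L]
    (T : (Fin d → ℂ) → (Fin d → ℤ) → L)
    (hlin : ∀ r : Fin d → ℤ, IsLinearMap ℂ (fun u => T u r))
    (hzero : ∀ u : Fin d → ℂ, T u 0 = 0)
    (hind : LinearIndependent ℂ
      (fun p : Fin d × {r : Fin d → ℤ // r ≠ 0} => T (Pi.single p.1 1) p.2.1))
    (hspan : Submodule.span ℂ
      (Set.range fun p : Fin d × {r : Fin d → ℤ // r ≠ 0} =>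
        T (Pi.single p.1 1) p.2.1) = ⊤)
    (hbr : ∀ (u v : Fin d → ℂ) (r s : Fin d → ℤ),
      ⁅T v s, T u r⁆
        = (∑ i, u i * (s i : ℂ)) • T v s - (∑ i, v i * (r i : ℂ)) • T u r
          + T ((∑ i, v i * (r i : ℂ)) • u - (∑ i, u i * (s i : ℂ)) • v) (r + s))
    (k : ℕ) (hk : 1 ≤ k) :
    (∀ (x : L), ∀ y ∈ Ik T k, ⁅x, y⁆ ∈ Ik T k) ∧
    (2 ≤ k → Ik T k ≤ Ik T (k - 1)) :=
  Ik_is_ideal_and_decreasing_general d L T hlin hspan hbr k hk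
end

section
/- For every integer k ≥ 1, every nonzero u ∈ ℂ^d, every s ∈ ℤ^d and all nonzero m_1,…,m_k ∈ ℤ^d, the element T_k(u,s,m_1,…,m_k) does not belong to I_{k+1}. -/
open Finset

/-- `(k+1)`-fold (or more) finite differences of `x ↦ x^k` vanish. -/
theorem aux_diff_pow_zero (k : ℕ) : ∀ {ι : Type*} [DecidableEq ι] (s : Finset ι),
    k < s.card → ∀ (b : ι → ℂ) (a : ℂ),
    ∑ t ∈ s.powerset, (-1 : ℂ) ^ t.card * (a + ∑ i ∈ t, b i) ^ k = 0 := by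
  induction k using Nat.strong_induction_on with
  | _ k IH =>
    intro ι _ s hs b a
    obtain ⟨j, hj⟩ : s.Nonempty := Finset.card_pos.mp (by omega)
    obtain ⟨s', hjs', rfl⟩ : ∃ s', j ∉ s' ∧ s = insert j s' :=
      ⟨s.erase j, Finset.notMem_erase j s, (Finset.insert_erase hj).symm⟩
    have hcard : k ≤ s'.card := by
      have := Finset.card_insert_of_notMem hjs'; omega
    have step : ∀ t ∈ s'.powerset,
        (-1:ℂ)^t.card * (a + ∑ i ∈ t, b i)^k
          + (-1:ℂ)^(insert j t).card * (a + ∑ i ∈ insert j t, b i)^k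
        = ∑ l ∈ Finset.range k,
            (-(b j ^ (k-l) * (k.choose l : ℂ))) * ((-1:ℂ)^t.card * (a + ∑ i ∈ t, b i)^l) := by
      intro t ht
      have hjt : j ∉ t := fun h => hjs' (Finset.mem_powerset.mp ht h)
      rw [Finset.card_insert_of_notMem hjt, Finset.sum_insert hjt]
      set X := ∑ i ∈ t, b i with hX
      have hexp : (a + (b j + X))^k
          = ∑ l ∈ Finset.range (k+1), (a + X)^l * b j ^ (k-l) * (k.choose l : ℂ) := by
        rw [show a + (b j + X) = (a + X) + b j by ring, add_pow]
      have hrhs : ∑ l ∈ Finset.range k,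
            (-(b j ^ (k-l) * (k.choose l:ℂ))) * ((-1:ℂ)^t.card * (a+X)^l)
          = (-1:ℂ)^(t.card+1) * ∑ l ∈ Finset.range k, (a+X)^l * b j ^ (k-l) * (k.choose l:ℂ) := by
        rw [Finset.mul_sum]
        exact Finset.sum_congr rfl fun l _ => by ring
      rw [hrhs, hexp, Finset.sum_range_succ, Nat.choose_self, Nat.sub_self]
      push_cast
      ring
    calc ∑ t ∈ (insert j s').powerset, (-1:ℂ)^t.card * (a + ∑ i ∈ t, b i)^k
        = ∑ t ∈ s'.powerset, ((-1:ℂ)^t.card * (a + ∑ i ∈ t, b i)^k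
            + (-1:ℂ)^(insert j t).card * (a + ∑ i ∈ insert j t, b i)^k) := by
          rw [Finset.sum_powerset_insert hjs', Finset.sum_add_distrib]
      _ = ∑ t ∈ s'.powerset, ∑ l ∈ Finset.range k,
            (-(b j ^ (k-l) * (k.choose l : ℂ))) * ((-1:ℂ)^t.card * (a + ∑ i ∈ t, b i)^l) :=
          Finset.sum_congr rfl step
      _ = ∑ l ∈ Finset.range k, (-(b j ^ (k-l) * (k.choose l : ℂ)))
            * ∑ t ∈ s'.powerset, ((-1:ℂ)^t.card * (a + ∑ i ∈ t, b i)^l) := by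
          rw [Finset.sum_comm]
          exact Finset.sum_congr rfl fun l _ => (Finset.mul_sum _ _ _).symm
      _ = 0 := by
          apply Finset.sum_eq_zero
          intro l hl
          rw [IH l (Finset.mem_range.mp hl) s'
            (lt_of_lt_of_le (Finset.mem_range.mp hl) hcard) b a, mul_zero]

/-- The `n`-fold finite difference of `x ↦ x^n` is `(-1)^n n! ∏ bᵢ`. -/
theorem aux_diff_pow_card {ι : Type*} [DecidableEq ι] (s : Finset ι) (b : ι → ℂ) (a : ℂ) :
    ∑ t ∈ s.powerset, (-1:ℂ)^t.card * (a + ∑ i ∈ t, b i)^s.card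
      = (-1:ℂ)^s.card * (Nat.factorial s.card) * ∏ i ∈ s, b i := by
  induction s using Finset.induction_on with
  | empty => simp
  | @insert j s' hjs' IH =>
    set n := s'.card with hn
    rw [Finset.card_insert_of_notMem hjs']
    have step : ∀ t ∈ s'.powerset,
        (-1:ℂ)^t.card * (a + ∑ i ∈ t, b i)^(n+1)
          + (-1:ℂ)^(insert j t).card * (a + ∑ i ∈ insert j t, b i)^(n+1)
        = ∑ l ∈ Finset.range (n+1),
            (-(b j ^ (n+1-l) * ((n+1).choose l : ℂ))) * ((-1:ℂ)^t.card * (a + ∑ i ∈ t, b i)^l) := by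
      intro t ht
      have hjt : j ∉ t := fun h => hjs' (Finset.mem_powerset.mp ht h)
      rw [Finset.card_insert_of_notMem hjt, Finset.sum_insert hjt]
      set X := ∑ i ∈ t, b i with hX
      have hexp : (a + (b j + X))^(n+1)
          = ∑ l ∈ Finset.range (n+2), (a + X)^l * b j ^ (n+1-l) * ((n+1).choose l : ℂ) := by
        rw [show a + (b j + X) = (a + X) + b j by ring, add_pow]
      have hrhs : ∑ l ∈ Finset.range (n+1),
            (-(b j ^ (n+1-l) * ((n+1).choose l:ℂ))) * ((-1:ℂ)^t.card * (a+X)^l)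
          = (-1:ℂ)^(t.card+1)
              * ∑ l ∈ Finset.range (n+1), (a+X)^l * b j ^ (n+1-l) * ((n+1).choose l:ℂ) := by
        rw [Finset.mul_sum]
        exact Finset.sum_congr rfl fun l _ => by ring
      rw [hrhs, hexp, Finset.sum_range_succ (n := n+1), Nat.choose_self, Nat.sub_self]
      push_cast
      ring
    calc ∑ t ∈ (insert j s').powerset, (-1:ℂ)^t.card * (a + ∑ i ∈ t, b i)^(n+1)
        = ∑ t ∈ s'.powerset, ((-1:ℂ)^t.card * (a + ∑ i ∈ t, b i)^(n+1)
            + (-1:ℂ)^(insert j t).card * (a + ∑ i ∈ insert j t, b i)^(n+1)) := by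
          rw [Finset.sum_powerset_insert hjs', Finset.sum_add_distrib]
      _ = ∑ t ∈ s'.powerset, ∑ l ∈ Finset.range (n+1),
            (-(b j ^ (n+1-l) * ((n+1).choose l : ℂ)))
              * ((-1:ℂ)^t.card * (a + ∑ i ∈ t, b i)^l) :=
          Finset.sum_congr rfl step
      _ = ∑ l ∈ Finset.range (n+1), (-(b j ^ (n+1-l) * ((n+1).choose l : ℂ)))
            * ∑ t ∈ s'.powerset, ((-1:ℂ)^t.card * (a + ∑ i ∈ t, b i)^l) := by
          rw [Finset.sum_comm]
          exact Finset.sum_congr rfl fun l _ => (Finset.mul_sum _ _ _).symm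
      _ = (-1:ℂ)^(n+1) * ((Nat.factorial (n+1)) : ℂ) * ∏ i ∈ insert j s', b i := by
          rw [Finset.sum_range_succ]
          have hzero' : ∀ l ∈ Finset.range n,
              (-(b j ^ (n+1-l) * ((n+1).choose l : ℂ)))
                * ∑ t ∈ s'.powerset, ((-1:ℂ)^t.card * (a + ∑ i ∈ t, b i)^l) = 0 := by
            intro l hl
            rw [aux_diff_pow_zero l s' (Finset.mem_range.mp hl) b a, mul_zero]
          rw [Finset.sum_eq_zero hzero', zero_add, IH, Finset.prod_insert hjs',
            Nat.choose_succ_self_right]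
          have : n + 1 - n = 1 := by omega
          rw [this, Nat.factorial_succ]
          push_cast
          ring



/-- For every `k ≥ 1`, nonzero `u ∈ ℂ^d`, `s ∈ ℤ^d` and nonzero `m₁,…,m_k ∈ ℤ^d`,
the element `T_k(u,s,m₁,…,m_k)` does not belong to `I_{k+1}`. -/
theorem Tk_not_mem_Ik_succ (d : ℕ) (hd : 2 ≤ d)
    (L : Type*) [LieRing L] [LieAlgebra ℂ L]
    (T : (Fin d → ℂ) → (Fin d → ℤ) → L)
    (hlin : ∀ r : Fin d → ℤ, IsLinearMap ℂ (fun u => T u r))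
    (hzero : ∀ u : Fin d → ℂ, T u 0 = 0)
    (hind : LinearIndependent ℂ
      (fun p : Fin d × {r : Fin d → ℤ // r ≠ 0} => T (Pi.single p.1 1) p.2.1))
    (hspan : Submodule.span ℂ
      (Set.range fun p : Fin d × {r : Fin d → ℤ // r ≠ 0} =>
        T (Pi.single p.1 1) p.2.1) = ⊤)
    (hbr : ∀ (u v : Fin d → ℂ) (r s : Fin d → ℤ),
      ⁅T v s, T u r⁆
        = (∑ i, u i * (s i : ℂ)) • T v s - (∑ i, v i * (r i : ℂ)) • T u r
          + T ((∑ i, v i * (r i : ℂ)) • u - (∑ i, u i * (s i : ℂ)) • v) (r + s))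
    (k : ℕ) (hk : 1 ≤ k) (u : Fin d → ℂ) (hu : u ≠ 0) (s : Fin d → ℤ)
    (m : Fin k → Fin d → ℤ) (hm : ∀ i, m i ≠ 0) :
    Tk T k u s m ∉ Ik T (k + 1) := by
  classical
  -- pick a coordinate where u is nonzero
  obtain ⟨i₀, hi₀⟩ := Function.ne_iff.mp hu
  rw [Pi.zero_apply] at hi₀
  -- choose t0 : ℂ with ∑ j, (m i j) * t0^j ≠ 0 for all i
  set p : Fin k → Polynomial ℂ :=
    fun i => ∑ j : Fin d, Polynomial.C ((m i j : ℂ)) * Polynomial.X ^ (j : ℕ) with hp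
  have hpne : ∀ i, p i ≠ 0 := by
    intro i h
    obtain ⟨j, hj⟩ := Function.ne_iff.mp (hm i)
    rw [Pi.zero_apply] at hj
    apply hj
    have hcoeff := congrArg (fun q => Polynomial.coeff q (j : ℕ)) h
    simp only [hp, Polynomial.finset_sum_coeff, Polynomial.coeff_C_mul,
      Polynomial.coeff_X_pow, Polynomial.coeff_zero, mul_ite, mul_one, mul_zero,
      Fin.val_eq_val, Finset.sum_ite_eq, Finset.mem_univ, if_true] at hcoeff
    exact_mod_cast hcoeff
  have hqne : (∏ i : Fin k, p i) ≠ 0 := Finset.prod_ne_zero_iff.mpr fun i _ => hpne i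
  have hex : ∃ t0 : ℂ, ∀ i, Polynomial.eval t0 (p i) ≠ 0 := by
    by_contra hcon
    push_neg at hcon
    apply hqne
    apply Polynomial.funext
    intro t0
    obtain ⟨i, hi⟩ := hcon t0
    rw [Polynomial.eval_prod, Polynomial.eval_zero]
    exact Finset.prod_eq_zero (Finset.mem_univ i) hi
  obtain ⟨t0, ht0⟩ := hex
  -- the additive character c
  set c : (Fin d → ℤ) →+ ℂ :=
    { toFun := fun x => ∑ j, (x j : ℂ) * t0 ^ (j : ℕ)
      map_zero' := by simp
      map_add' := by
        intro x y
        show (∑ j, (((x + y) j : ℤ) : ℂ) * t0 ^ (j : ℕ)) = _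
        rw [← Finset.sum_add_distrib]
        exact Finset.sum_congr rfl fun j _ => by
          simp only [Pi.add_apply]; push_cast; ring } with hc
  have hcm : ∀ i, c (m i) ≠ 0 := by
    intro i
    have : Polynomial.eval t0 (p i) = c (m i) := by
      simp [hp, hc, Polynomial.eval_finset_sum]
    rw [← this]
    exact ht0 i
  -- the linear functional φ
  let B : Module.Basis (Fin d × {r : Fin d → ℤ // r ≠ 0}) ℂ L := Module.Basis.mk hind hspan.ge
  let φ : L →ₗ[ℂ] ℂ :=
    B.constr ℂ (fun q => if q.1 = i₀ then (c q.2.1) ^ k else 0)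
  have hφ_single : ∀ (j : Fin d) (r : Fin d → ℤ) (hr : r ≠ 0),
      φ (T (Pi.single j 1) r) = if j = i₀ then (c r) ^ k else 0 := by
    intro j r hr
    have hb : B (j, ⟨r, hr⟩) = T (Pi.single j 1) r := Module.Basis.mk_apply hind hspan.ge _
    rw [← hb]
    exact B.constr_basis ℂ _ _
  have hφT : ∀ (w : Fin d → ℂ) (r : Fin d → ℤ), φ (T w r) = w i₀ * (c r) ^ k := by
    intro w r
    by_cases hr : r = 0
    · subst hr
      rw [hzero, map_zero, map_zero, zero_pow (by omega : k ≠ 0), mul_zero]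
    · have h1 : (∑ j, w j • (Pi.single j (1:ℂ) : Fin d → ℂ)) = w := by
        funext x
        rw [Finset.sum_apply]
        simp only [Pi.smul_apply, Pi.single_apply, smul_eq_mul, mul_ite, mul_one, mul_zero]
        rw [Finset.sum_ite_eq Finset.univ x w]
        simp
      have h2 : T w r = ∑ j, w j • T (Pi.single j (1:ℂ)) r := by
        calc T w r = IsLinearMap.mk' _ (hlin r) w := rfl
          _ = IsLinearMap.mk' _ (hlin r) (∑ j, w j • (Pi.single j (1:ℂ) : Fin d → ℂ)) := by
              rw [h1]
          _ = ∑ j, w j • IsLinearMap.mk' _ (hlin r) (Pi.single j (1:ℂ)) := by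
              rw [map_sum]
              exact Finset.sum_congr rfl fun j _ => map_smul _ _ _
          _ = ∑ j, w j • T (Pi.single j (1:ℂ)) r := rfl
      rw [h2, map_sum]
      calc ∑ j, φ (w j • T (Pi.single j 1) r)
          = ∑ j, w j * (if j = i₀ then (c r) ^ k else 0) := by
            refine Finset.sum_congr rfl fun j _ => ?_
            rw [map_smul, hφ_single j r hr, smul_eq_mul]
        _ = w i₀ * (c r) ^ k := by
            simp [Finset.sum_ite_eq' Finset.univ i₀]
  have hφTk : ∀ (n : ℕ) (w : Fin d → ℂ) (r : Fin d → ℤ) (mm : Fin n → Fin d → ℤ),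
      φ (Tk T n w r mm)
        = w i₀ * ∑ S ∈ (Finset.univ : Finset (Fin n)).powerset,
            (-1 : ℂ) ^ S.card * (c r + ∑ i ∈ S, c (mm i)) ^ k := by
    intro n w r mm
    rw [Finset.powerset_univ, Tk, map_sum, Finset.mul_sum]
    refine Finset.sum_congr rfl fun S _ => ?_
    rw [map_smul, hφT, smul_eq_mul, map_add, map_sum]
    ring
  -- φ vanishes on I_{k+1}
  have hker : Ik T (k + 1) ≤ LinearMap.ker φ := by
    rw [Ik, Submodule.span_le]
    rintro x ⟨w, r, mm, rfl⟩
    simp only [SetLike.mem_coe, LinearMap.mem_ker]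
    rw [hφTk, aux_diff_pow_zero k Finset.univ
      (by simp : k < (Finset.univ : Finset (Fin (k+1))).card) (fun i => c (mm i)) (c r),
      mul_zero]
  -- conclude
  intro hmem
  have h0 : φ (Tk T k u s m) = 0 := hker hmem
  rw [hφTk] at h0
  have hval := aux_diff_pow_card (Finset.univ : Finset (Fin k)) (fun i => c (m i)) (c s)
  simp only [Finset.card_univ, Fintype.card_fin] at hval
  rw [hval] at h0
  refine (mul_ne_zero hi₀ (mul_ne_zero (mul_ne_zero (pow_ne_zero _ (by norm_num))
    (Nat.cast_ne_zero.mpr (Nat.factorial_ne_zero k)))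
    (Finset.prod_ne_zero_iff.mpr fun i _ => hcm i))) h0
end

section
/- For every integer k ≥ 1, u ∈ ℂ^d, s, n ∈ ℤ^d and nonzero m_1,…,m_k ∈ ℤ^d: (a) T_k(u,s,m_1,m_2,…,m_k) + T_k(u,s,n,m_2,…,m_k) − T_k(u,s,m_1+n,m_2,…,m_k) ∈ I_{k+1}; and (b) T_k(u,s,−m_1,m_2,…,m_k) = −T_k(u,s−m_1,m_1,m_2,…,m_k) in 𝔗. -/
/-!
Peeling off the first direction gives `T_{j+1}(u, r, a, m) = T_j(u, r, m) - T_j(u, r + a, m)`.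
Writing `A(r) = T_{k-1}(u, r, m₂, …, m_k)`, the additivity defect in (a) is therefore
`A(s) - A(s + m₁) - A(s + n) + A(s + m₁ + n) = T_{k+1}(u, s, n, m₁, …, m_k)`, and (b) reads
`A(s) - A(s - m₁) = -(A(s - m₁) - A(s))`.
-/

open Finset

theorem Fin.sum_finset_succ {n : ℕ} {M : Type*} [AddCommMonoid M] (f : Finset (Fin (n + 1)) → M) :
    ∑ S, f S = ∑ S : Finset (Fin n), f (S.image Fin.succ)
      + ∑ S : Finset (Fin n), f (insert 0 (S.image Fin.succ)) := by
  have hinj : Function.Injective (·.image Fin.succ : Finset (Fin n) → _) :=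
    image_injective (Fin.succ_injective n)
  have hzero (S : Finset (Fin n)) : 0 ∉ S.image Fin.succ := by simp [Fin.succ_ne_zero]
  rw [← powerset_univ, ← insert_compl_self 0, ← Fin.image_succ_univ, sum_powerset_insert (hzero _),
    powerset_image, sum_image hinj.injOn, sum_image fun S _ T _ h => hinj <| by
      simpa [erase_insert (hzero _)] using congrArg (·.erase 0) h, powerset_univ]

section

variable {d k : ℕ} {L : Type*} [AddCommGroup L] [Module ℂ L]
  (T : (Fin d → ℂ) → (Fin d → ℤ) → L) (u : Fin d → ℂ) (r : Fin d → ℤ)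

theorem Tk_cons (a : Fin d → ℤ) (m : Fin k → Fin d → ℤ) :
    Tk T (k + 1) u r (Fin.cons a m) = Tk T k u r m - Tk T k u (r + a) m := by
  rw [Tk, Fin.sum_finset_succ, sub_eq_add_neg, Tk, Tk, ← sum_neg_distrib]
  congr 1 <;> refine sum_congr rfl fun S _ => ?_
  · simp [card_image_of_injective _ (Fin.succ_injective k), sum_image]
  · simp [card_image_of_injective _ (Fin.succ_injective k), sum_image, card_insert_of_notMem,
      pow_succ, add_assoc]

theorem Tk_succ (m : Fin (k + 1) → Fin d → ℤ) :
    Tk T (k + 1) u r m = Tk T k u r (Fin.tail m) - Tk T k u (r + m 0) (Fin.tail m) := by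
  rw [← Tk_cons, Fin.cons_self_tail]

theorem Tk_update_zero (m : Fin (k + 1) → Fin d → ℤ) (x : Fin d → ℤ) :
    Tk T (k + 1) u r (Function.update m 0 x)
      = Tk T k u r (Fin.tail m) - Tk T k u (r + x) (Fin.tail m) := by
  rw [Tk_succ, Fin.tail_update_zero, Function.update_self]

theorem Tk_add_Tk_update_zero_sub (m : Fin (k + 1) → Fin d → ℤ) (n : Fin d → ℤ) :
    Tk T (k + 1) u r m + Tk T (k + 1) u r (Function.update m 0 n)
        - Tk T (k + 1) u r (Function.update m 0 (m 0 + n))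
      = Tk T (k + 2) u r (Fin.cons n m) := by
  rw [Tk_cons, Tk_update_zero, Tk_update_zero, Tk_succ, Tk_succ, add_comm (m 0) n, ← add_assoc]
  abel

theorem Tk_update_zero_neg (m : Fin (k + 1) → Fin d → ℤ) :
    Tk T (k + 1) u r (Function.update m 0 (-(m 0))) = -Tk T (k + 1) u (r - m 0) m := by
  rw [Tk_update_zero, Tk_succ, sub_add_cancel, ← sub_eq_add_neg, neg_sub]

theorem Tk_mem_Ik (m : Fin k → Fin d → ℤ) : Tk T k u r m ∈ Ik T k :=
  Submodule.subset_span ⟨u, r, m, rfl⟩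

end

-- `k ≥ 1` is encoded as `k + 1`, and `m₁` is `m 0`.
theorem Tk_additivity_and_inversion_general (d : ℕ)
    (L : Type*) [LieRing L] [LieAlgebra ℂ L]
    (T : (Fin d → ℂ) → (Fin d → ℤ) → L)
    (k : ℕ) (u : Fin d → ℂ) (s n : Fin d → ℤ)
    (m : Fin (k + 1) → Fin d → ℤ) :
    (Tk T (k + 1) u s m + Tk T (k + 1) u s (Function.update m 0 n)
        - Tk T (k + 1) u s (Function.update m 0 (m 0 + n)) ∈ Ik T (k + 2)) ∧
    Tk T (k + 1) u s (Function.update m 0 (-(m 0)))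
        = -Tk T (k + 1) u (s - m 0) m :=
  ⟨Tk_add_Tk_update_zero_sub T u s m n ▸ Tk_mem_Ik T u s (Fin.cons n m),
    Tk_update_zero_neg T u s m⟩

/-- For `k ≥ 1`, `u ∈ ℂ^d`, `s, n ∈ ℤ^d` and nonzero `m₁,…,m_k ∈ ℤ^d`:
(a) `T_k(u,s,m₁,m₂,…,m_k) + T_k(u,s,n,m₂,…,m_k) − T_k(u,s,m₁+n,m₂,…,m_k) ∈ I_{k+1}`;
(b) `T_k(u,s,−m₁,m₂,…,m_k) = −T_k(u,s−m₁,m₁,m₂,…,m_k)`.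
(Here `k ≥ 1` is encoded as `k + 1` for a natural number `k`, and `m₁ = m 0`.) -/
theorem Tk_additivity_and_inversion (d : ℕ) (hd : 2 ≤ d)
    (L : Type*) [LieRing L] [LieAlgebra ℂ L]
    (T : (Fin d → ℂ) → (Fin d → ℤ) → L)
    (hlin : ∀ r : Fin d → ℤ, IsLinearMap ℂ (fun u => T u r))
    (hzero : ∀ u : Fin d → ℂ, T u 0 = 0)
    (hind : LinearIndependent ℂ
      (fun p : Fin d × {r : Fin d → ℤ // r ≠ 0} => T (Pi.single p.1 1) p.2.1))
    (hspan : Submodule.span ℂ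
      (Set.range fun p : Fin d × {r : Fin d → ℤ // r ≠ 0} =>
        T (Pi.single p.1 1) p.2.1) = ⊤)
    (hbr : ∀ (u v : Fin d → ℂ) (r s : Fin d → ℤ),
      ⁅T v s, T u r⁆
        = (∑ i, u i * (s i : ℂ)) • T v s - (∑ i, v i * (r i : ℂ)) • T u r
          + T ((∑ i, v i * (r i : ℂ)) • u - (∑ i, u i * (s i : ℂ)) • v) (r + s))
    (k : ℕ) (u : Fin d → ℂ) (s n : Fin d → ℤ)
    (m : Fin (k + 1) → Fin d → ℤ) (hm : ∀ i, m i ≠ 0) :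
    (Tk T (k + 1) u s m + Tk T (k + 1) u s (Function.update m 0 n)
        - Tk T (k + 1) u s (Function.update m 0 (m 0 + n)) ∈ Ik T (k + 2)) ∧
    Tk T (k + 1) u s (Function.update m 0 (-(m 0)))
        = -Tk T (k + 1) u (s - m 0) m :=
  Tk_additivity_and_inversion_general d L T k u s n m
end

section
/- For every integer k ≥ 1, all nonzero m_1,…,m_k ∈ ℤ^d and every s ∈ ℤ^d, the element t^s ∏_{i=1}^k (1 − t^{m_i}) of A does not belong to the ideal J_{k+1}. -/
/-- `J_k`, the ideal of `A` generated by all products `∏_{i=1}^k (1 − t^{mᵢ})` with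
`m₁,…,m_k ∈ ℤ^d \ {0}`. -/
noncomputable def Jk (d k : ℕ) : Ideal (Ad d) :=
  Ideal.span {x : Ad d | ∃ n : Fin k → Fin d → ℤ,
    (∀ i, n i ≠ 0) ∧ x = ∏ i, (1 - tm (n i))}

private lemma order_prod_ps {ι : Type*} (s : Finset ι) (f : ι → PowerSeries ℂ) :
    PowerSeries.order (∏ i ∈ s, f i) = ∑ i ∈ s, PowerSeries.order (f i) := by
  classical
  induction s using Finset.cons_induction with
  | empty => simp [PowerSeries.order_one]
  | cons a s ha ih => rw [Finset.prod_cons, Finset.sum_cons, PowerSeries.order_mul, ih]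

/-- For every `k ≥ 1`, nonzero `m₁,…,m_k ∈ ℤ^d` and every `s ∈ ℤ^d`,
`t^s ∏_{i=1}^k (1 − t^{mᵢ})` does not belong to `J_{k+1}`. -/
theorem monomial_mul_prod_not_mem_Jk_succ (d : ℕ) (hd : 2 ≤ d)
    (k : ℕ) (hk : 1 ≤ k) (m : Fin k → Fin d → ℤ) (hm : ∀ i, m i ≠ 0)
    (s : Fin d → ℤ) :
    tm s * ∏ i, (1 - tm (m i)) ∉ Jk d (k + 1) := by
  classical
  set P : Fin k → Polynomial ℂ :=
    fun i => ∑ j : Fin d, Polynomial.C ((m i j : ℂ)) * Polynomial.X ^ (j : ℕ) with hP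
  have hPne : ∀ i, P i ≠ 0 := by
    intro i hPi
    obtain ⟨j, hj⟩ := Function.ne_iff.mp (hm i)
    have hcoe : (P i).coeff (j : ℕ) = (m i j : ℂ) := by
      simp [hP, Polynomial.finset_sum_coeff, Polynomial.coeff_C_mul, Polynomial.coeff_X_pow,
        Fin.val_eq_val]
    rw [hPi] at hcoe
    simp only [Polynomial.coeff_zero] at hcoe
    exact hj (by exact_mod_cast hcoe.symm)
  obtain ⟨x, hx⟩ : ∃ x : ℂ, ∀ i, (P i).eval x ≠ 0 := by
    by_contra h
    push_neg at h
    have hQ : (∏ i, P i) ≠ 0 := Finset.prod_ne_zero_iff.mpr fun i _ => hPne i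
    apply hQ
    apply Polynomial.eq_zero_of_infinite_isRoot
    have huniv : {y : ℂ | (∏ i, P i).IsRoot y} = Set.univ := by
      apply Set.eq_univ_of_forall
      intro y
      obtain ⟨i, hi⟩ := h y
      simp only [Set.mem_setOf_eq, Polynomial.IsRoot, Polynomial.eval_prod]
      exact Finset.prod_eq_zero (Finset.mem_univ i) hi
    rw [huniv]
    exact Set.infinite_univ
  set lam : (Fin d → ℤ) → ℂ := fun r => ∑ j : Fin d, (r j : ℂ) * x ^ (j : ℕ) with hlam
  have lam_zero : lam 0 = 0 := by simp [hlam]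
  have lam_add : ∀ r r', lam (r + r') = lam r + lam r' := by
    intro r r'
    simp only [hlam, Pi.add_apply, Int.cast_add, add_mul]
    rw [Finset.sum_add_distrib]
  have lam_m : ∀ i, lam (m i) ≠ 0 := by
    intro i
    have := hx i
    simpa [hP, hlam, Polynomial.eval_finset_sum] using this
  set F : Multiplicative (Fin d → ℤ) →* PowerSeries ℂ :=
    { toFun := fun r => PowerSeries.rescale (lam (Multiplicative.toAdd r)) (PowerSeries.exp ℂ)
      map_one' := by
        show PowerSeries.rescale (lam 0) (PowerSeries.exp ℂ) = 1
        rw [lam_zero, PowerSeries.rescale_zero]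
        simp [PowerSeries.constantCoeff_exp]
      map_mul' := by
        intro r r'
        show PowerSeries.rescale (lam (Multiplicative.toAdd r + Multiplicative.toAdd r')) _ = _
        rw [lam_add, ← PowerSeries.exp_mul_exp_eq_exp_add] } with hF
  set Φ : Ad d →ₐ[ℂ] PowerSeries ℂ :=
    AddMonoidAlgebra.lift ℂ (PowerSeries ℂ) (Fin d → ℤ) F with hΦ
  have Φ_tm : ∀ r, Φ (tm r) = PowerSeries.rescale (lam r) (PowerSeries.exp ℂ) := by
    intro r
    rw [hΦ, tm, AddMonoidAlgebra.lift_single, one_smul]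
    rfl
  have hc0 : ∀ a : ℂ,
      PowerSeries.constantCoeff (1 - PowerSeries.rescale a (PowerSeries.exp ℂ)) = 0 := by
    intro a
    rw [map_sub, map_one, ← PowerSeries.coeff_zero_eq_constantCoeff_apply,
      PowerSeries.coeff_rescale, PowerSeries.coeff_exp]
    simp
  have hord1 : ∀ a : ℂ, a ≠ 0 →
      PowerSeries.order (1 - PowerSeries.rescale a (PowerSeries.exp ℂ)) = ((1 : ℕ) : ℕ∞) := by
    intro a ha
    rw [PowerSeries.order_eq_nat]
    constructor
    · rw [map_sub, PowerSeries.coeff_one, PowerSeries.coeff_rescale, PowerSeries.coeff_exp]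
      simp [ha]
    · intro i hi
      obtain rfl : i = 0 := Nat.lt_one_iff.mp hi
      rw [PowerSeries.coeff_zero_eq_constantCoeff_apply]
      exact hc0 a
  have hord0 : ∀ a : ℂ,
      PowerSeries.order (PowerSeries.rescale a (PowerSeries.exp ℂ)) = ((0 : ℕ) : ℕ∞) := by
    intro a
    rw [PowerSeries.order_eq_nat]
    refine ⟨?_, fun i hi => absurd hi (Nat.not_lt_zero i)⟩
    rw [PowerSeries.coeff_rescale, PowerSeries.coeff_exp]
    simp
  intro hmem
  have hΦel : Φ (tm s * ∏ i, (1 - tm (m i))) =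
      PowerSeries.rescale (lam s) (PowerSeries.exp ℂ) *
        ∏ i, (1 - PowerSeries.rescale (lam (m i)) (PowerSeries.exp ℂ)) := by
    rw [map_mul, map_prod]
    simp only [map_sub, map_one, Φ_tm]
  have hordel : PowerSeries.order (Φ (tm s * ∏ i, (1 - tm (m i)))) = (k : ℕ∞) := by
    rw [hΦel, PowerSeries.order_mul, hord0 (lam s), order_prod_ps,
      Finset.sum_congr rfl fun i _ => hord1 _ (lam_m i)]
    simp
  have hspan : Φ (tm s * ∏ i, (1 - tm (m i))) ∈
      Ideal.span {(PowerSeries.X : PowerSeries ℂ) ^ (k + 1)} := by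
    have hle : Jk d (k + 1) ≤
        Ideal.comap Φ (Ideal.span {(PowerSeries.X : PowerSeries ℂ) ^ (k + 1)}) := by
      rw [Jk, Ideal.span_le]
      rintro y ⟨n, hn, rfl⟩
      simp only [SetLike.mem_coe, Ideal.mem_comap, Ideal.mem_span_singleton]
      rw [map_prod]
      have hXpow : (PowerSeries.X : PowerSeries ℂ) ^ (k + 1)
          = ∏ _i : Fin (k + 1), (PowerSeries.X : PowerSeries ℂ) := by
        simp
      rw [hXpow]
      apply Finset.prod_dvd_prod_of_dvd
      intro i _
      rw [PowerSeries.X_dvd_iff]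
      simp only [map_sub, map_one, Φ_tm]
      exact hc0 _
    exact Ideal.mem_comap.mp (hle hmem)
  rw [Ideal.mem_span_singleton] at hspan
  obtain ⟨g, hg⟩ := hspan
  rw [hg, PowerSeries.order_mul, PowerSeries.order_X_pow] at hordel
  have h1 : ((k + 1 : ℕ) : ℕ∞) ≤ (k : ℕ∞) := hordel ▸ le_self_add
  exact absurd (Nat.cast_le.mp h1) (by omega)
end

section
/- For every integer k ≥ 1 and all nonzero m_1,…,m_k ∈ ℤ^d, there exist indices i_1,…,i_k ∈ {1,…,d} such that ε(D_{i_1}D_{i_2}⋯D_{i_k}(∏_{j=1}^k (1 − t^{m_j}))) ≠ 0. On the other hand, for any n_1,…,n_{k+1} ∈ ℤ^d and any indices i_1,…,i_k ∈ {1,…,d}, ε(D_{i_1}⋯D_{i_k}(∏_{j=1}^{k+1} (1 − t^{n_j}))) = 0. -/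
open Finset

theorem Ideal.prod_mem_pow_card {R ι : Type*} [CommSemiring R] {I : Ideal R} {s : Finset ι}
    {f : ι → R} (hf : ∀ i ∈ s, f i ∈ I) : ∏ i ∈ s, f i ∈ I ^ s.card :=
  prod_const (M := Ideal R) I ▸ prod_mem_prod hf

theorem Module.Dual.exists_forall_apply_ne_zero {K V ι : Type*} [Field K] [Infinite K]
    [AddCommGroup V] [Module K V] [Finite ι] (φ : ι → Module.Dual K V) (hφ : ∀ j, φ j ≠ 0) :
    ∃ v, ∀ j, φ j v ≠ 0 := by
  by_contra! h
  obtain ⟨j, hj⟩ := Subspace.exists_eq_top_of_iUnion_eq_univ (p := fun j => LinearMap.ker (φ j))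
    (Set.eq_univ_of_forall fun v => Set.mem_iUnion.2 (h v))
  exact hφ j (LinearMap.ker_eq_top.1 hj)

namespace Derivation

variable {R A B ι : Type*} [CommSemiring R] [CommRing A] [Algebra R A] [CommRing B]

theorem finset_sum_apply (s : Finset ι) (D : ι → Derivation R A A) (a : A) :
    (∑ i ∈ s, D i) a = ∑ i ∈ s, D i a := by
  change coeFnAddMonoidHom (∑ i ∈ s, D i) a = _
  rw [map_sum, Finset.sum_apply]
  rfl

theorem leibniz_prod [DecidableEq ι] (D : Derivation R A A) (s : Finset ι) (f : ι → A) :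
    D (∏ i ∈ s, f i) = ∑ i ∈ s, (∏ j ∈ s.erase i, f j) * D (f i) := by
  induction s using Finset.induction_on with
  | empty => simp
  | insert a s ha ih =>
    rw [prod_insert ha, leibniz, ih, sum_insert ha, erase_insert ha, smul_eq_mul, smul_eq_mul,
      mul_sum, add_comm]
    congr 1
    refine sum_congr rfl fun i hi => ?_
    rw [erase_insert_of_ne (ne_of_mem_of_not_mem hi ha).symm, prod_insert (mt mem_of_mem_erase ha)]
    ring

section PowersOfAnIdeal

variable {I : Ideal A}

theorem map_mem_pow_of_mem_pow_succ (D : Derivation R A A) {n : ℕ} {x : A}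
    (hx : x ∈ I ^ (n + 1)) : D x ∈ I ^ n := by
  induction n generalizing x with
  | zero => simp [Ideal.one_eq_top]
  | succ n ih =>
    rw [pow_succ] at hx
    refine Submodule.mul_induction_on hx (fun a ha b hb => ?_) fun y z hy hz => ?_
    · rw [leibniz, smul_eq_mul, smul_eq_mul]
      exact add_mem (Ideal.mul_mem_right _ _ ha) (pow_succ' I n ▸ Ideal.mul_mem_mul hb (ih ha))
    · rw [map_add]
      exact add_mem hy hz

theorem iterate_mem_pow (D : Derivation R A A) {n m : ℕ} {x : A} (hx : x ∈ I ^ (n + m)) :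
    (⇑D)^[n] x ∈ I ^ m := by
  induction n generalizing x with
  | zero => simpa using hx
  | succ n ih =>
    rw [Function.iterate_succ_apply]
    exact ih (D.map_mem_pow_of_mem_pow_succ (by rwa [add_right_comm] at hx))

theorem foldr_mem_pow (D : ι → Derivation R A A) (L : List ι) {n : ℕ} {x : A}
    (hx : x ∈ I ^ (L.length + n)) : L.foldr (fun i a => D i a) x ∈ I ^ n := by
  induction L generalizing n with
  | nil => simpa using hx
  | cons i L ih =>
    exact (D i).map_mem_pow_of_mem_pow_succ (ih (by rwa [List.length_cons, add_right_comm] at hx))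

end PowersOfAnIdeal

theorem map_iterate_mul_prod_of_mem_ker (ε : A →+* B) (D : Derivation R A A) {s : Finset ι}
    {f : ι → A} (hf : ∀ j ∈ s, f j ∈ RingHom.ker ε) (b : A) :
    ε ((⇑D)^[s.card] (b * ∏ j ∈ s, f j)) = s.card.factorial * ε b * ∏ j ∈ s, ε (D (f j)) := by
  classical
  obtain ⟨n, hn⟩ : ∃ n, s.card = n := ⟨_, rfl⟩
  induction n generalizing s b with
  | zero => simp [card_eq_zero.1 hn]
  | succ n ih =>
    have hD : D (b * ∏ j ∈ s, f j) =
        ∑ j ∈ s, (b * D (f j)) * ∏ i ∈ s.erase j, f i + (∏ j ∈ s, f j) * D b := by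
      rw [leibniz, leibniz_prod, smul_eq_mul, smul_eq_mul, mul_sum]
      exact congrArg (· + _) (sum_congr rfl fun j _ => by ring)
    have hterm : ∀ j ∈ s, ε ((⇑D)^[n] ((b * D (f j)) * ∏ i ∈ s.erase j, f i)) =
        n.factorial * ε b * ∏ i ∈ s, ε (D (f i)) := fun j hj => by
      have hcard : (s.erase j).card = n := by rw [card_erase_of_mem hj, hn, Nat.add_sub_cancel]
      have := ih (fun i hi => hf i (mem_of_mem_erase hi)) (b * D (f j)) hcard
      rw [hcard] at this
      rw [this, ← mul_prod_erase s _ hj, map_mul]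
      ring
    have hrest : ε ((⇑D)^[n] ((∏ j ∈ s, f j) * D b)) = 0 := by
      refine RingHom.mem_ker.1 (pow_one (RingHom.ker ε) ▸ D.iterate_mem_pow ?_)
      exact Ideal.mul_mem_right _ _ (hn ▸ Ideal.prod_mem_pow_card hf)
    rw [hn, Function.iterate_succ_apply, hD, ← coeFn_coe, ← Module.End.coe_pow, map_add,
      map_sum, map_add, map_sum]
    simp only [Module.End.coe_pow, coeFn_coe]
    rw [hrest, sum_congr rfl hterm, sum_const, hn, nsmul_eq_mul, Nat.factorial_succ]
    push_cast
    ring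

theorem iterate_sum_smul_mem_span [Fintype ι] (D : ι → Derivation R A A) (x : ι → R) (n : ℕ)
    (y : A) : (⇑(∑ i, x i • D i))^[n] y ∈ Submodule.span R
      (Set.range fun idx : Fin n → ι => (List.ofFn idx).foldr (fun i a => D i a) y) := by
  induction n with
  | zero => exact Submodule.subset_span ⟨Fin.elim0, rfl⟩
  | succ n ih =>
    rw [Function.iterate_succ_apply']
    have := Submodule.mem_map_of_mem (f := ((∑ i, x i • D i : Derivation R A A) : A →ₗ[R] A)) ih
    rw [Submodule.map_span] at this
    refine Submodule.span_le.2 ?_ this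
    rintro _ ⟨_, ⟨idx, rfl⟩, rfl⟩
    rw [coeFn_coe, finset_sum_apply]
    refine Submodule.sum_mem _ fun i _ =>
      Submodule.smul_mem _ _ (Submodule.subset_span ⟨Fin.cons i idx, ?_⟩)
    simp [List.ofFn_succ]

theorem exists_map_foldr_prod_ne_zero [IsDomain B] [CharZero B] [Algebra R B] [Fintype ι]
    (ε : A →ₐ[R] B) (D : ι → Derivation R A A) (x : ι → R) {k : ℕ} {f : Fin k → A}
    (hf : ∀ j, f j ∈ RingHom.ker ε) (hx : ∀ j, ε ((∑ i, x i • D i) (f j)) ≠ 0) :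
    ∃ idx : Fin k → ι, ε ((List.ofFn idx).foldr (fun i a => D i a) (∏ j, f j)) ≠ 0 := by
  by_contra! h
  have hzero : (⇑(∑ i, x i • D i))^[k] (∏ j, f j) ∈ LinearMap.ker ε.toLinearMap :=
    Submodule.span_le.2 (Set.range_subset_iff.2 fun idx => LinearMap.mem_ker.2 (h idx))
      (iterate_sum_smul_mem_span D x k _)
  have hformula := map_iterate_mul_prod_of_mem_ker (ε : A →+* B) (∑ i, x i • D i)
    (s := Finset.univ) (fun j _ => hf j) 1
  rw [Finset.card_univ, Fintype.card_fin, one_mul] at hformula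
  rw [LinearMap.mem_ker, AlgHom.toLinearMap_apply] at hzero
  simp only [AlgHom.coe_toRingHom, hzero, map_one, mul_one] at hformula
  exact mul_ne_zero (Nat.cast_ne_zero.2 k.factorial_ne_zero) (prod_ne_zero_iff.2 fun j _ => hx j)
    hformula.symm

end Derivation

theorem augmentation_of_Euler_derivatives_general (d : ℕ)
    (Di : Fin d → Derivation ℂ (Ad d) (Ad d))
    (hDi : ∀ (i : Fin d) (s : Fin d → ℤ), Di i (tm s) = ((s i : ℂ)) • tm s)
    (ε : Ad d →ₐ[ℂ] ℂ) (hε : ∀ r : Fin d → ℤ, ε (tm r) = 1)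
    (k : ℕ) :
    (∀ m : Fin k → Fin d → ℤ, (∀ j, m j ≠ 0) →
      ∃ idx : Fin k → Fin d,
        ε ((List.ofFn idx).foldr (fun i a => Di i a)
            (∏ j, (1 - tm (m j)))) ≠ 0) ∧
    (∀ (n : Fin (k + 1) → Fin d → ℤ) (idx : Fin k → Fin d),
      ε ((List.ofFn idx).foldr (fun i a => Di i a)
          (∏ j, (1 - tm (n j)))) = 0) := by
  have hker (r : Fin d → ℤ) : 1 - tm r ∈ RingHom.ker ε := by
    rw [RingHom.mem_ker, map_sub, map_one, hε, sub_self]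
  refine ⟨fun m hm => ?_, fun n idx => ?_⟩
  · have hφ (j : Fin k) : dotProductEquiv ℂ (Fin d) (Int.cast ∘ m j) ≠ 0 :=
      (map_ne_zero_iff _ (LinearEquiv.injective _)).2 fun h =>
        hm j (funext fun i => Int.cast_eq_zero.1 (congrFun h i))
    obtain ⟨x, hx⟩ := Module.Dual.exists_forall_apply_ne_zero _ hφ
    refine Derivation.exists_map_foldr_prod_ne_zero ε Di x (fun j => hker (m j)) fun j => ?_
    have hEuler : ε ((∑ i, x i • Di i) (1 - tm (m j))) = -((Int.cast ∘ m j) ⬝ᵥ x) := by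
      rw [map_sub, Derivation.map_one_eq_zero, zero_sub, map_neg, Derivation.finset_sum_apply]
      simp [hDi, hε, dotProduct, mul_comm]
    rw [hEuler, neg_ne_zero]
    exact hx j
  · have hmem := Ideal.prod_mem_pow_card (s := Finset.univ) fun j _ => hker (n j)
    exact RingHom.mem_ker.1 (pow_one (RingHom.ker ε) ▸
      Derivation.foldr_mem_pow Di (List.ofFn idx) (by simpa using hmem))

/-- Let `Dᵢ = tᵢ ∂/∂tᵢ` be the Euler derivations (so `Dᵢ t^m = mᵢ t^m`) and let
`ε : A → ℂ` be the augmentation (`ε(t^m) = 1`).  For every `k ≥ 1` and nonzero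
`m₁,…,m_k ∈ ℤ^d` there are indices `i₁,…,i_k` with
`ε(D_{i₁}⋯D_{i_k}(∏_{j=1}^k (1 − t^{mⱼ}))) ≠ 0`; on the other hand, for any
`n₁,…,n_{k+1} ∈ ℤ^d` and any indices `i₁,…,i_k`,
`ε(D_{i₁}⋯D_{i_k}(∏_{j=1}^{k+1} (1 − t^{nⱼ}))) = 0`. -/
theorem augmentation_of_Euler_derivatives (d : ℕ) (hd : 2 ≤ d)
    (Di : Fin d → Derivation ℂ (Ad d) (Ad d))
    (hDi : ∀ (i : Fin d) (s : Fin d → ℤ), Di i (tm s) = ((s i : ℂ)) • tm s)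
    (ε : Ad d →ₐ[ℂ] ℂ) (hε : ∀ r : Fin d → ℤ, ε (tm r) = 1)
    (k : ℕ) (hk : 1 ≤ k) :
    (∀ m : Fin k → Fin d → ℤ, (∀ j, m j ≠ 0) →
      ∃ idx : Fin k → Fin d,
        ε ((List.ofFn idx).foldr (fun i a => Di i a)
            (∏ j, (1 - tm (m j)))) ≠ 0) ∧
    (∀ (n : Fin (k + 1) → Fin d → ℤ) (idx : Fin k → Fin d),
      ε ((List.ofFn idx).foldr (fun i a => Di i a)
          (∏ j, (1 - tm (n j)))) = 0) :=
  augmentation_of_Euler_derivatives_general d Di hDi ε hε k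
end

section
/- One has I_1 = 𝔗, and for every integer k ≥ 1 the quotient vector space I_k/I_{k+1} has dimension at most d^{k+1} over ℂ. Consequently, each I_k has finite codimension in 𝔗. -/
open Finset Submodule

namespace IkAux

variable {d : ℕ}

noncomputable def Ee (d : ℕ) (r : Fin d → ℤ) : AddMonoidAlgebra ℂ (Fin d → ℤ) :=
  AddMonoidAlgebra.single r 1

lemma Ee_mul (r s : Fin d → ℤ) : Ee d r * Ee d s = Ee d (r + s) := by
  simp [Ee, AddMonoidAlgebra.single_mul_single]

lemma Ee_zero : Ee d 0 = 1 := rfl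

noncomputable def PP (d k : ℕ) (m : Fin k → Fin d → ℤ) : AddMonoidAlgebra ℂ (Fin d → ℤ) :=
  ∏ i, (1 - Ee d (m i))

lemma prod_Ee {ι : Type*} (s : Finset ι) (m : ι → Fin d → ℤ) :
    ∏ i ∈ s, Ee d (m i) = Ee d (∑ i ∈ s, m i) := by
  classical
  induction s using Finset.cons_induction with
  | empty => simp [Ee_zero]
  | cons a s ha ih => rw [Finset.prod_cons, Finset.sum_cons, ih, Ee_mul]

lemma Ee_mul_PP (k : ℕ) (r : Fin d → ℤ) (m : Fin k → Fin d → ℤ) :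
    Ee d r * PP d k m
      = ∑ S : Finset (Fin k), ((-1 : ℂ) ^ S.card) • Ee d (r + ∑ i ∈ S, m i) := by
  have h1 : PP d k m = ∏ i, ((- Ee d (m i)) + 1) := by
    simp [PP, sub_eq_neg_add]
  rw [h1, Finset.prod_add]
  simp only [Finset.prod_const_one, mul_one, Finset.powerset_univ]
  rw [Finset.mul_sum]
  refine Finset.sum_congr rfl fun S _ => ?_
  have h2 : ∏ i ∈ S, (- Ee d (m i)) = ((-1 : ℂ) ^ S.card) • Ee d (∑ i ∈ S, m i) := by
    classical
    induction S using Finset.cons_induction with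
    | empty => simp [Ee_zero]
    | cons a s ha ih =>
      rw [Finset.prod_cons, ih (Finset.mem_univ s), Finset.sum_cons, Finset.card_cons,
        ← Ee_mul, pow_succ]
      simp only [neg_mul, mul_one, smul_neg, neg_smul, mul_smul_comm, mul_neg]
  rw [h2, mul_smul_comm, Ee_mul]

noncomputable def SK (d k : ℕ) : Submodule ℂ (AddMonoidAlgebra ℂ (Fin d → ℤ)) :=
  Submodule.span ℂ {a | ∃ r m, a = Ee d r * PP d k m}

noncomputable def BK (d k : ℕ) : Submodule ℂ (AddMonoidAlgebra ℂ (Fin d → ℤ)) :=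
  Submodule.span ℂ
    (Set.range fun j : Fin k → Fin d => PP d k (fun i => (Pi.single (j i) 1 : Fin d → ℤ)))

lemma PP_mem_SK (k : ℕ) (m : Fin k → Fin d → ℤ) : PP d k m ∈ SK d k :=
  Submodule.subset_span ⟨0, m, by rw [Ee_zero, one_mul]⟩

lemma PP_succ (k : ℕ) (m : Fin (k + 1) → Fin d → ℤ) :
    PP d (k + 1) m = PP d k (fun i => m i.castSucc) * (1 - Ee d (m (Fin.last k))) :=
  Fin.prod_univ_castSucc _

lemma SK_succ_le (k : ℕ) : SK d (k + 1) ≤ SK d k := by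
  rw [SK, Submodule.span_le]
  rintro x ⟨r, m, rfl⟩
  have h : Ee d r * PP d (k + 1) m
      = Ee d r * PP d k (fun i => m i.castSucc)
        - Ee d (r + m (Fin.last k)) * PP d k (fun i => m i.castSucc) := by
    rw [PP_succ, ← Ee_mul]; ring
  rw [h]
  exact sub_mem (Submodule.subset_span ⟨r, _, rfl⟩) (Submodule.subset_span ⟨r + m (Fin.last k), _, rfl⟩)

lemma SK_le_of_le {a b : ℕ} (h : a ≤ b) : SK d b ≤ SK d a := by
  induction b with
  | zero => simpa [Nat.le_zero.1 h] using le_rfl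
  | succ n ih =>
    rcases Nat.lt_or_ge a (n+1) with hlt | hge
    · exact (SK_succ_le n).trans (ih (Nat.lt_succ_iff.1 hlt))
    · have : a = n + 1 := le_antisymm h hge
      subst this; exact le_rfl

lemma PP_append {a b : ℕ} (m : Fin a → Fin d → ℤ) (m' : Fin b → Fin d → ℤ) :
    PP d a m * PP d b m' = PP d (a + b) (Fin.append m m') := by
  rw [PP, PP, PP, Fin.prod_univ_add]
  simp [Fin.append_left, Fin.append_right]

lemma SK_mul_SK {a b : ℕ} {x y : AddMonoidAlgebra ℂ (Fin d → ℤ)}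
    (hx : x ∈ SK d a) (hy : y ∈ SK d b) : x * y ∈ SK d (a + b) := by
  induction hx using Submodule.span_induction with
  | mem x hxx =>
    obtain ⟨r, m, rfl⟩ := hxx
    induction hy using Submodule.span_induction with
    | mem y hyy =>
      obtain ⟨s, m', rfl⟩ := hyy
      have h : Ee d r * PP d a m * (Ee d s * PP d b m')
          = Ee d (r + s) * PP d (a + b) (Fin.append m m') := by
        rw [← PP_append, ← Ee_mul]; ring
      rw [h]
      exact Submodule.subset_span ⟨r + s, _, rfl⟩
    | zero => rw [mul_zero]; exact zero_mem _
    | add y z _ _ h1 h2 => rw [mul_add]; exact add_mem h1 h2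
    | smul c y _ h1 => rw [mul_smul_comm]; exact Submodule.smul_mem _ _ h1
  | zero => rw [zero_mul]; exact zero_mem _
  | add x y _ _ h1 h2 => rw [add_mul]; exact add_mem h1 h2
  | smul c x _ h1 => rw [smul_mul_assoc]; exact Submodule.smul_mem _ _ h1

lemma BK_le_SK (k : ℕ) : BK d k ≤ SK d k := by
  rw [BK, Submodule.span_le]
  rintro x ⟨j, rfl⟩
  exact PP_mem_SK _ _

lemma BK_mul_BK {a b : ℕ} {x y : AddMonoidAlgebra ℂ (Fin d → ℤ)}
    (hx : x ∈ BK d a) (hy : y ∈ BK d b) : x * y ∈ BK d (a + b) := by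
  induction hx using Submodule.span_induction with
  | mem x hxx =>
    obtain ⟨j, rfl⟩ := hxx
    induction hy using Submodule.span_induction with
    | mem y hyy =>
      obtain ⟨j', rfl⟩ := hyy
      have h : PP d a (fun i => (Pi.single (j i) 1 : Fin d → ℤ))
            * PP d b (fun i => (Pi.single (j' i) 1 : Fin d → ℤ))
          = PP d (a + b) (fun i => (Pi.single (Fin.append j j' i) 1 : Fin d → ℤ)) := by
        rw [PP_append]
        congr 1
        funext i
        refine Fin.addCases (fun i => ?_) (fun i => ?_) i <;>
          simp [Fin.append_left, Fin.append_right]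
      rw [h]
      exact Submodule.subset_span ⟨Fin.append j j', rfl⟩
    | zero => rw [mul_zero]; exact zero_mem _
    | add y z _ _ h1 h2 => rw [mul_add]; exact add_mem h1 h2
    | smul c y _ h1 => rw [mul_smul_comm]; exact Submodule.smul_mem _ _ h1
  | zero => rw [zero_mul]; exact zero_mem _
  | add x y _ _ h1 h2 => rw [add_mul]; exact add_mem h1 h2
  | smul c x _ h1 => rw [smul_mul_assoc]; exact Submodule.smul_mem _ _ h1

lemma PP_one (m : Fin 1 → Fin d → ℤ) : PP d 1 m = 1 - Ee d (m 0) := by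
  simp [PP]

lemma PP_two (m : Fin 2 → Fin d → ℤ) : PP d 2 m = (1 - Ee d (m 0)) * (1 - Ee d (m 1)) := by
  simp [PP, Fin.prod_univ_two]

lemma one_sub_Ee_mem (a : Fin d → ℤ) : 1 - Ee d a ∈ BK d 1 ⊔ SK d 2 := by
  set M : Submodule ℂ (AddMonoidAlgebra ℂ (Fin d → ℤ)) := BK d 1 ⊔ SK d 2 with hM
  have hadd : ∀ x y : Fin d → ℤ,
      M.mkQ (1 - Ee d (x + y)) = M.mkQ (1 - Ee d x) + M.mkQ (1 - Ee d y) := by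
    intro x y
    have hmem : (1 - Ee d x) * (1 - Ee d y) ∈ M := by
      refine Submodule.mem_sup_right ?_
      have := PP_mem_SK (d := d) 2 ![x, y]
      rwa [PP_two ![x, y], Matrix.cons_val_zero, Matrix.cons_val_one, Matrix.cons_val_zero] at this
    have hdiff : (1 - Ee d (x + y)) - ((1 - Ee d x) + (1 - Ee d y))
        = -((1 - Ee d x) * (1 - Ee d y)) := by
      rw [← Ee_mul]; ring
    have h0 : M.mkQ ((1 - Ee d (x + y)) - ((1 - Ee d x) + (1 - Ee d y))) = 0 := by
      rw [hdiff]
      simpa [Submodule.Quotient.mk_eq_zero] using neg_mem hmem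
    rw [map_sub, sub_eq_zero] at h0
    simpa [map_add] using h0
  let φ : (Fin d → ℤ) →+ (AddMonoidAlgebra ℂ (Fin d → ℤ) ⧸ M) :=
    AddMonoidHom.mk' (fun x => M.mkQ (1 - Ee d x)) hadd
  have hbasis : ∀ j : Fin d, φ (Pi.single j 1) = 0 := by
    intro j
    have hmem : 1 - Ee d (Pi.single j 1) ∈ M := by
      refine Submodule.mem_sup_left (Submodule.subset_span ⟨fun _ => j, ?_⟩)
      simpa using PP_one (d := d) (fun _ => (Pi.single j 1 : Fin d → ℤ))
    show M.mkQ (1 - Ee d (Pi.single j 1)) = 0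
    rw [Submodule.mkQ_apply, Submodule.Quotient.mk_eq_zero]
    exact hmem
  have ha : φ a = 0 := by
    have hsum : a = ∑ j, (a j) • (Pi.single j 1 : Fin d → ℤ) := by
      conv_lhs => rw [← Finset.univ_sum_single a]
      refine Finset.sum_congr rfl fun j _ => ?_
      rw [← Pi.single_smul, smul_eq_mul, mul_one]
    rw [hsum, map_sum]
    refine Finset.sum_eq_zero fun j _ => ?_
    rw [map_zsmul, hbasis, smul_zero]
  have : M.mkQ (1 - Ee d a) = 0 := ha
  rwa [← Submodule.Quotient.mk_eq_zero, ← Submodule.mkQ_apply]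

lemma PP_mem_BK_sup (k : ℕ) (m : Fin k → Fin d → ℤ) :
    PP d k m ∈ BK d k ⊔ SK d (k + 1) := by
  induction k with
  | zero =>
    refine Submodule.mem_sup_left (Submodule.subset_span ⟨Fin.elim0, ?_⟩)
    simp [PP]
  | succ k ih =>
    rw [PP_succ]
    obtain ⟨p, hp, w, hw, hpw⟩ := Submodule.mem_sup.1 (ih (fun i => m i.castSucc))
    obtain ⟨q, hq, v, hv, hqv⟩ := Submodule.mem_sup.1 (one_sub_Ee_mem (d := d) (m (Fin.last k)))
    rw [← hpw, ← hqv]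
    have hexp : (p + w) * (q + v) = p * q + (p * v + (w * q + w * v)) := by ring
    rw [hexp]
    refine add_mem (Submodule.mem_sup_left (BK_mul_BK hp hq)) (Submodule.mem_sup_right ?_)
    refine add_mem (SK_mul_SK (a := k) (b := 2) (BK_le_SK k hp) hv) ?_
    refine add_mem (SK_mul_SK (a := k + 1) (b := 1) hw (BK_le_SK 1 hq)) ?_
    exact SK_le_of_le (by omega) (SK_mul_SK (a := k + 1) (b := 2) hw hv)

lemma SK_le_BK_sup (k : ℕ) : SK d k ≤ BK d k ⊔ SK d (k + 1) := by
  rw [SK, Submodule.span_le]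
  rintro x ⟨r, m, rfl⟩
  have h : Ee d r * PP d k m = PP d k m - (1 - Ee d r) * PP d k m := by ring
  rw [h]
  refine sub_mem (PP_mem_BK_sup k m) (Submodule.mem_sup_right ?_)
  have h1 : (1 : AddMonoidAlgebra ℂ (Fin d → ℤ)) - Ee d r ∈ SK d 1 := by
    have := PP_mem_SK (d := d) 1 (fun _ => r)
    rwa [PP_one] at this
  exact SK_le_of_le (by omega) (SK_mul_SK h1 (PP_mem_SK k m))

section Lside

variable {L : Type*} [AddCommGroup L] [Module ℂ L]
variable (T : (Fin d → ℂ) → (Fin d → ℤ) → L)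

noncomputable def FF (u : Fin d → ℂ) : AddMonoidAlgebra ℂ (Fin d → ℤ) →ₗ[ℂ] L :=
  (Finsupp.linearCombination ℂ (T u)).comp (AddMonoidAlgebra.coeffLinearEquiv ℂ).toLinearMap

lemma FF_Ee (u : Fin d → ℂ) (r : Fin d → ℤ) : FF T u (Ee d r) = T u r := by
  show Finsupp.linearCombination ℂ (T u) (Finsupp.single r 1) = T u r
  simp

lemma Tk_eq (k : ℕ) (u : Fin d → ℂ) (r : Fin d → ℤ) (m : Fin k → Fin d → ℤ) :
    Tk T k u r m = FF T u (Ee d r * PP d k m) := by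
  rw [Ee_mul_PP, map_sum]
  refine Finset.sum_congr rfl fun S _ => ?_
  rw [map_smul, FF_Ee]

lemma FF_mem_Ik (u : Fin d → ℂ) (k : ℕ) {x : AddMonoidAlgebra ℂ (Fin d → ℤ)}
    (hx : x ∈ SK d k) : FF T u x ∈ Ik T k := by
  induction hx using Submodule.span_induction with
  | mem x hxx =>
    obtain ⟨r, m, rfl⟩ := hxx
    exact Submodule.subset_span ⟨u, r, m, (Tk_eq T k u r m).symm⟩
  | zero => rw [map_zero]; exact zero_mem _
  | add x y _ _ h1 h2 => rw [map_add]; exact add_mem h1 h2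
  | smul c x _ h1 => rw [map_smul]; exact Submodule.smul_mem _ _ h1

lemma T_decomp (hlin : ∀ r : Fin d → ℤ, IsLinearMap ℂ (fun u => T u r)) (u : Fin d → ℂ) (s : Fin d → ℤ) :
    T u s = ∑ i, u i • T (Pi.single i 1) s := by
  have h1 : u = ∑ i, u i • (Pi.single i (1 : ℂ) : Fin d → ℂ) := by
    conv_lhs => rw [← Finset.univ_sum_single u]
    exact Finset.sum_congr rfl fun i _ => by rw [← Pi.single_smul, smul_eq_mul, mul_one]
  let Tl := IsLinearMap.mk' _ (hlin s)
  have h2 : ∀ v, T v s = Tl v := fun v => rfl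
  rw [h2]
  conv_lhs => rw [h1]
  rw [map_sum]
  exact Finset.sum_congr rfl fun i _ => by rw [map_smul, h2]

lemma Tk_decomp (hlin : ∀ r : Fin d → ℤ, IsLinearMap ℂ (fun u => T u r)) (k : ℕ) (u : Fin d → ℂ) (r : Fin d → ℤ) (m : Fin k → Fin d → ℤ) :
    Tk T k u r m = ∑ i, u i • Tk T k (Pi.single i 1) r m := by
  rw [Tk]
  have h1 : ∀ S : Finset (Fin k), ((-1 : ℂ) ^ S.card) • T u (r + ∑ i ∈ S, m i)
      = ∑ i, u i • (((-1 : ℂ) ^ S.card) • T (Pi.single i 1) (r + ∑ i ∈ S, m i)) := by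
    intro S
    rw [T_decomp T hlin, Finset.smul_sum]
    exact Finset.sum_congr rfl fun i _ => smul_comm _ _ _
  rw [Finset.sum_congr rfl fun S _ => h1 S, Finset.sum_comm]
  refine Finset.sum_congr rfl fun i _ => ?_
  rw [Tk, Finset.smul_sum]

/-- The `d^(k+1)` distinguished elements of `L`. -/
noncomputable def BL (k : ℕ) (p : Fin d × (Fin k → Fin d)) : L :=
  Tk T k (Pi.single p.1 1) 0 (fun i => (Pi.single (p.2 i) 1 : Fin d → ℤ))

lemma FF_BK_mem (hlin : ∀ r : Fin d → ℤ, IsLinearMap ℂ (fun u => T u r)) (k : ℕ) (u : Fin d → ℂ) {b : AddMonoidAlgebra ℂ (Fin d → ℤ)}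
    (hb : b ∈ BK d k) :
    FF T u b ∈ Submodule.span ℂ (Set.range (BL T k)) := by
  induction hb using Submodule.span_induction with
  | mem x hxx =>
    obtain ⟨j, rfl⟩ := hxx
    have h1 : FF T u (PP d k (fun i => (Pi.single (j i) 1 : Fin d → ℤ)))
        = Tk T k u 0 (fun i => (Pi.single (j i) 1 : Fin d → ℤ)) := by
      rw [Tk_eq, Ee_zero, one_mul]
    rw [h1, Tk_decomp T hlin]
    exact Submodule.sum_mem _ fun i _ =>
      Submodule.smul_mem _ _ (Submodule.subset_span ⟨(i, j), rfl⟩)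
  | zero => rw [map_zero]; exact zero_mem _
  | add x y _ _ h1 h2 => rw [map_add]; exact add_mem h1 h2
  | smul c x _ h1 => rw [map_smul]; exact Submodule.smul_mem _ _ h1

lemma Ik_succ_le (k : ℕ) : Ik T (k + 1) ≤ Ik T k := by
  rw [Ik, Submodule.span_le]
  rintro x ⟨u, r, m, rfl⟩
  rw [Tk_eq]
  exact FF_mem_Ik T u k (SK_succ_le k (Submodule.subset_span ⟨r, m, rfl⟩))

lemma Ik_le_sup (hlin : ∀ r : Fin d → ℤ, IsLinearMap ℂ (fun u => T u r)) (k : ℕ) :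
    Ik T k ≤ Submodule.span ℂ (Set.range (BL T k)) ⊔ Ik T (k + 1) := by
  rw [Ik, Submodule.span_le]
  rintro x ⟨u, r, m, rfl⟩
  rw [Tk_eq]
  obtain ⟨b, hb, w, hw, hbw⟩ :=
    Submodule.mem_sup.1 (SK_le_BK_sup k (Submodule.subset_span ⟨r, m, rfl⟩))
  rw [← hbw, map_add]
  exact add_mem (Submodule.mem_sup_left (FF_BK_mem T hlin k u hb))
    (Submodule.mem_sup_right (FF_mem_Ik T u (k + 1) hw))

lemma Tk_one (u : Fin d → ℂ) (r : Fin d → ℤ) (m : Fin 1 → Fin d → ℤ) :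
    Tk T 1 u r m = T u r - T u (r + m 0) := by
  rw [Tk_eq, PP_one, mul_sub, mul_one, Ee_mul, map_sub, FF_Ee, FF_Ee]

lemma Q_equiv (k : ℕ) :
    Nonempty ((Ik T k ⧸ Submodule.comap (Ik T k).subtype (Ik T (k + 1))) ≃ₗ[ℂ]
      (Submodule.map (Ik T (k + 1)).mkQ (Ik T k))) := by
  set N := Ik T (k + 1) with hN
  set M := Ik T k with hMdef
  let g : M →ₗ[ℂ] L ⧸ N := N.mkQ.comp M.subtype
  have hker : LinearMap.ker g = Submodule.comap M.subtype N := by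
    ext x
    simp [g, LinearMap.mem_ker, Submodule.Quotient.mk_eq_zero]
  have hrange : LinearMap.range g = Submodule.map N.mkQ M := by
    rw [LinearMap.range_comp, Submodule.range_subtype]
  exact ⟨(Submodule.quotEquivOfEq _ _ hker.symm).trans
    (g.quotKerEquivRange.trans (LinearEquiv.ofEq _ _ hrange))⟩

lemma map_mkQ_le (hlin : ∀ r : Fin d → ℤ, IsLinearMap ℂ (fun u => T u r)) (k : ℕ) :
    Submodule.map (Ik T (k + 1)).mkQ (Ik T k)
      ≤ Submodule.span ℂ (Set.range ((Ik T (k + 1)).mkQ ∘ BL T k)) := by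
  set N := Ik T (k + 1)
  calc Submodule.map N.mkQ (Ik T k)
      ≤ Submodule.map N.mkQ (Submodule.span ℂ (Set.range (BL T k)) ⊔ N) :=
        Submodule.map_mono (Ik_le_sup T hlin k)
    _ = Submodule.map N.mkQ (Submodule.span ℂ (Set.range (BL T k)))
          ⊔ Submodule.map N.mkQ N := Submodule.map_sup _ _ _
    _ ≤ Submodule.span ℂ (Set.range (N.mkQ ∘ BL T k)) := by
        refine sup_le ?_ ?_
        · rw [Submodule.map_span, ← Set.range_comp]
        · intro x hx
          obtain ⟨y, hy, rfl⟩ := hx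
          have : N.mkQ y = 0 := by
            rw [Submodule.mkQ_apply, Submodule.Quotient.mk_eq_zero]; exact hy
          rw [this]; exact zero_mem _

lemma rank_Q_le (hlin : ∀ r : Fin d → ℤ, IsLinearMap ℂ (fun u => T u r)) (k : ℕ) :
    Module.rank ℂ (Ik T k ⧸ Submodule.comap (Ik T k).subtype (Ik T (k + 1)))
      ≤ ((d : Cardinal) ^ (k + 1)) := by
  obtain ⟨e⟩ := Q_equiv T k
  rw [e.rank_eq]
  have h1 : Module.rank ℂ (Submodule.map (Ik T (k + 1)).mkQ (Ik T k))
      ≤ Module.rank ℂ (Submodule.span ℂ (Set.range ((Ik T (k + 1)).mkQ ∘ BL T k))) :=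
    Submodule.rank_mono (map_mkQ_le T hlin k)
  refine h1.trans ((rank_span_le _).trans ?_)
  have h4 := Cardinal.mk_range_le_lift (f := ((Ik T (k + 1)).mkQ ∘ BL T k))
  simp only [Cardinal.mk_fintype, Fintype.card_prod, Fintype.card_fun, Fintype.card_fin,
    Cardinal.lift_natCast, Cardinal.lift_id', Cardinal.lift_uzero] at h4
  refine h4.trans ?_
  have h3 : ((d * d ^ k : ℕ) : Cardinal) = ((d : Cardinal) ^ (k + 1)) := by
    push_cast
    rw [pow_succ]
    ring
  rw [← h3]

end Lside

end IkAux

/-- `I_1 = 𝔗`; for every `k ≥ 1` the quotient `I_k/I_{k+1}` has dimension at most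
`d^{k+1}` over `ℂ`; consequently each `I_k` has finite codimension in `𝔗`. -/
theorem Ik_cofinite (d : ℕ) (hd : 2 ≤ d)
    (L : Type*) [LieRing L] [LieAlgebra ℂ L]
    (T : (Fin d → ℂ) → (Fin d → ℤ) → L)
    (hlin : ∀ r : Fin d → ℤ, IsLinearMap ℂ (fun u => T u r))
    (hzero : ∀ u : Fin d → ℂ, T u 0 = 0)
    (hind : LinearIndependent ℂ
      (fun p : Fin d × {r : Fin d → ℤ // r ≠ 0} => T (Pi.single p.1 1) p.2.1))
    (hspan : Submodule.span ℂ
      (Set.range fun p : Fin d × {r : Fin d → ℤ // r ≠ 0} =>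
        T (Pi.single p.1 1) p.2.1) = ⊤)
    (hbr : ∀ (u v : Fin d → ℂ) (r s : Fin d → ℤ),
      ⁅T v s, T u r⁆
        = (∑ i, u i * (s i : ℂ)) • T v s - (∑ i, v i * (r i : ℂ)) • T u r
          + T ((∑ i, v i * (r i : ℂ)) • u - (∑ i, u i * (s i : ℂ)) • v) (r + s))
 :
    Ik T 1 = ⊤ ∧
    (∀ k : ℕ, 1 ≤ k →
      Module.rank ℂ
        (Ik T k ⧸ Submodule.comap (Ik T k).subtype (Ik T (k + 1)))
        ≤ ((d : Cardinal) ^ (k + 1))) ∧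
    (∀ k : ℕ, 1 ≤ k → FiniteDimensional ℂ (L ⧸ Ik T k)) := by
  have h1 : Ik T 1 = ⊤ := by
    refine le_antisymm le_top ?_
    rw [← hspan, Submodule.span_le]
    rintro x ⟨p, rfl⟩
    have hx : T (Pi.single p.1 1) p.2.1
        = Tk T 1 (Pi.single p.1 1) p.2.1 (fun _ => -p.2.1) := by
      rw [IkAux.Tk_one]
      simp [hzero]
    show T (Pi.single p.1 1) p.2.1 ∈ (Ik T 1 : Submodule ℂ L)
    rw [hx]
    exact Submodule.subset_span ⟨_, _, _, rfl⟩
  refine ⟨h1, fun k _ => IkAux.rank_Q_le T hlin k, ?_⟩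
  intro k hk
  induction k, hk using Nat.le_induction with
  | base =>
    rw [h1]
    haveI : Subsingleton (L ⧸ (⊤ : Submodule ℂ L)) :=
      Submodule.Quotient.subsingleton_iff.2 rfl
    infer_instance
  | succ k hk ih =>
    set N := Ik T (k + 1) with hN
    set M := Ik T k with hM
    haveI hQ : Module.Finite ℂ (M ⧸ Submodule.comap M.subtype N) := by
      rw [← Module.rank_lt_aleph0_iff]
      refine lt_of_le_of_lt (IkAux.rank_Q_le T hlin k) ?_
      have : ((d : Cardinal) ^ (k + 1)) = ((d ^ (k + 1) : ℕ) : Cardinal) := by push_cast; ring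
      rw [this]
      exact Cardinal.nat_lt_aleph0 _
    let f : (L ⧸ N) →ₗ[ℂ] L ⧸ M :=
      Submodule.mapQ N M LinearMap.id (by simpa using IkAux.Ik_succ_le T k)
    have hkerf : LinearMap.ker f = Submodule.map N.mkQ M := by
      apply le_antisymm
      · rintro x hx
        obtain ⟨y, rfl⟩ := Submodule.Quotient.mk_surjective N x
        have hy : y ∈ M := by
          simpa [f, Submodule.mapQ_apply, Submodule.Quotient.mk_eq_zero] using hx
        exact ⟨y, hy, rfl⟩
      · rintro x ⟨y, hy, rfl⟩
        show f (N.mkQ y) = 0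
        rw [Submodule.mkQ_apply, Submodule.mapQ_apply, LinearMap.id_apply,
          Submodule.Quotient.mk_eq_zero]
        exact hy
    obtain ⟨e⟩ := IkAux.Q_equiv T k
    haveI hker : Module.Finite ℂ (LinearMap.ker f) :=
      Module.Finite.equiv (e.trans (LinearEquiv.ofEq _ _ hkerf.symm))
    have hrn := LinearMap.rank_range_add_rank_ker f
    rw [show (FiniteDimensional ℂ (L ⧸ Ik T (k + 1))) = (FiniteDimensional ℂ (L ⧸ N)) from rfl]
    rw [FiniteDimensional, ← Module.rank_lt_aleph0_iff, ← hrn]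
    exact Cardinal.add_lt_aleph0 (Module.rank_lt_aleph0 ℂ _) (Module.rank_lt_aleph0 ℂ _)
end

section
/- There is a surjective Lie algebra homomorphism π : 𝔗 → gl_d(ℂ) satisfying π(T(u,r)) = ∑_{i,j} u_i r_j E_{ji} for all u ∈ ℂ^d, r ∈ ℤ^d (in particular π(T(e_i,e_j)) = E_{ji}), whose kernel is exactly I_2. Hence the quotient Lie algebra 𝔗/I_2 is isomorphic to gl_d(ℂ). -/
lemma fin2_finset_sum {V : Type*} [AddCommMonoid V] (g : Finset (Fin 2) → V) :
    ∑ S : Finset (Fin 2), g S = g ∅ + g {0} + g {1} + g {0, 1} := by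
  rw [show (Finset.univ : Finset (Finset (Fin 2))) = {∅, {0}, {1}, {0,1}} from by decide]
  rw [Finset.sum_insert (by decide), Finset.sum_insert (by decide),
    Finset.sum_insert (by decide), Finset.sum_singleton]
  abel

noncomputable def piMat (d : ℕ) (u : Fin d → ℂ) (r : Fin d → ℤ) :
    Matrix (Fin d) (Fin d) ℂ :=
  Matrix.of fun a b => u b * (r a : ℂ)

lemma piMat_zero (d : ℕ) (u : Fin d → ℂ) : piMat d u 0 = 0 := by
  ext a b; simp [piMat]

lemma piMat_eq_sum (d : ℕ) (u : Fin d → ℂ) (r : Fin d → ℤ) :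
    piMat d u r = ∑ i, ∑ j, (u i * (r j : ℂ)) • Matrix.single j i (1 : ℂ) := by
  ext a b
  simp [piMat, Matrix.sum_apply, Matrix.single, Matrix.smul_apply, ite_and,
    Finset.sum_ite_eq, Finset.sum_ite_eq', mul_comm]

lemma piMat_sum_smul_left (d : ℕ) (u : Fin d → ℂ) (r : Fin d → ℤ) :
    ∑ i, u i • piMat d (Pi.single i 1) r = piMat d u r := by
  ext a b
  simp [piMat, Matrix.sum_apply, Pi.single_apply, mul_ite, ite_mul, mul_comm,
    Finset.sum_ite_eq, Finset.sum_ite_eq']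

lemma piMat_bracket (d : ℕ) (u v : Fin d → ℂ) (r s : Fin d → ℤ) :
    ⁅piMat d v s, piMat d u r⁆
      = (∑ i, u i * (s i : ℂ)) • piMat d v s - (∑ i, v i * (r i : ℂ)) • piMat d u r
        + piMat d ((∑ i, v i * (r i : ℂ)) • u - (∑ i, u i * (s i : ℂ)) • v) (r + s) := by
  ext a b
  simp only [Ring.lie_def, Matrix.sub_apply, Matrix.add_apply, Matrix.smul_apply,
    Matrix.mul_apply, piMat, Matrix.of_apply, Pi.add_apply, Pi.sub_apply, Pi.smul_apply,
    smul_eq_mul, Int.cast_add]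
  have h1 : ∑ k, v k * (s a : ℂ) * (u b * (r k : ℂ))
      = (∑ k, v k * (r k : ℂ)) * ((s a : ℂ) * u b) := by
    rw [Finset.sum_mul]; exact Finset.sum_congr rfl fun k _ => by ring
  have h2 : ∑ k, u k * (r a : ℂ) * (v b * (s k : ℂ))
      = (∑ k, u k * (s k : ℂ)) * ((r a : ℂ) * v b) := by
    rw [Finset.sum_mul]; exact Finset.sum_congr rfl fun k _ => by ring
  rw [h1, h2]; ring

lemma pi_sum_single_smul {R : Type*} [Semiring R] (d : ℕ) (u : Fin d → R) :
    u = ∑ i, u i • (Pi.single i (1 : R) : Fin d → R) := by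
  conv_lhs => rw [← Finset.univ_sum_single u]
  exact Finset.sum_congr rfl fun j _ => by rw [← Pi.single_smul, smul_eq_mul, mul_one]


attribute [local instance 100] LieRing.ofAssociativeRing

/-- There is a surjective Lie algebra homomorphism `π : 𝔗 → gl_d(ℂ)` with
`π(T(u,r)) = ∑_{i,j} uᵢ rⱼ E_{ji}` whose kernel is exactly `I₂`; hence
`𝔗/I₂ ≅ gl_d(ℂ)`. -/
theorem T_mod_I2_iso_gl (d : ℕ) (hd : 2 ≤ d)
    (L : Type*) [LieRing L] [LieAlgebra ℂ L]
    (T : (Fin d → ℂ) → (Fin d → ℤ) → L)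
    (hlin : ∀ r : Fin d → ℤ, IsLinearMap ℂ (fun u => T u r))
    (hzero : ∀ u : Fin d → ℂ, T u 0 = 0)
    (hind : LinearIndependent ℂ
      (fun p : Fin d × {r : Fin d → ℤ // r ≠ 0} => T (Pi.single p.1 1) p.2.1))
    (hspan : Submodule.span ℂ
      (Set.range fun p : Fin d × {r : Fin d → ℤ // r ≠ 0} =>
        T (Pi.single p.1 1) p.2.1) = ⊤)
    (hbr : ∀ (u v : Fin d → ℂ) (r s : Fin d → ℤ),
      ⁅T v s, T u r⁆
        = (∑ i, u i * (s i : ℂ)) • T v s - (∑ i, v i * (r i : ℂ)) • T u r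
          + T ((∑ i, v i * (r i : ℂ)) • u - (∑ i, u i * (s i : ℂ)) • v) (r + s))
 :
    ∃ π : L →ₗ⁅ℂ⁆ Matrix (Fin d) (Fin d) ℂ,
      Function.Surjective π ∧
      (∀ (u : Fin d → ℂ) (r : Fin d → ℤ),
        π (T u r) = ∑ i, ∑ j, (u i * (r j : ℂ)) • Matrix.single j i (1 : ℂ)) ∧
      (∀ x : L, π x = 0 ↔ x ∈ Ik T 2) := by
  classical
  -- the linear map defined on the basis
  obtain ⟨π₀, hπ₀b⟩ : ∃ π₀ : L →ₗ[ℂ] Matrix (Fin d) (Fin d) ℂ,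
      ∀ p : Fin d × {r : Fin d → ℤ // r ≠ 0},
        π₀ (T (Pi.single p.1 1) p.2.1) = piMat d (Pi.single p.1 1) p.2.1 := by
    let b : Module.Basis (Fin d × {r : Fin d → ℤ // r ≠ 0}) ℂ L := Module.Basis.mk hind (by rw [hspan])
    refine ⟨b.constr ℂ (fun p => piMat d (Pi.single p.1 1) p.2.1), fun p => ?_⟩
    have h := b.constr_basis ℂ (fun p => piMat d (Pi.single p.1 1) p.2.1) p
    rwa [show b p = T (Pi.single p.1 1) p.2.1 from by rw [Module.Basis.mk_apply]] at h
  -- decomposition of T in u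
  have hTdec : ∀ (u : Fin d → ℂ) (r : Fin d → ℤ),
      T u r = ∑ i, u i • T (Pi.single i 1) r := by
    intro u r
    let g : (Fin d → ℂ) →ₗ[ℂ] L := IsLinearMap.mk' _ (hlin r)
    calc T u r = g u := rfl
      _ = g (∑ i, u i • (Pi.single i (1:ℂ) : Fin d → ℂ)) := by rw [← pi_sum_single_smul]
      _ = ∑ i, u i • g (Pi.single i 1) := by rw [map_sum]; simp
      _ = ∑ i, u i • T (Pi.single i 1) r := rfl
  -- key formula
  have hkey : ∀ (u : Fin d → ℂ) (r : Fin d → ℤ), π₀ (T u r) = piMat d u r := by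
    intro u r
    by_cases hr : r = 0
    · subst hr; rw [hzero, map_zero, piMat_zero]
    · rw [hTdec u r, map_sum]
      simp only [map_smul]
      calc ∑ i, u i • π₀ (T (Pi.single i 1) r)
          = ∑ i, u i • piMat d (Pi.single i 1) r :=
            Finset.sum_congr rfl fun i _ => by rw [hπ₀b (i, ⟨r, hr⟩)]
        _ = piMat d u r := piMat_sum_smul_left d u r
  -- π₀ is a Lie algebra map
  have hmem : ∀ x : L, x ∈ Submodule.span ℂ
      (Set.range fun p : Fin d × {r : Fin d → ℤ // r ≠ 0} =>
        T (Pi.single p.1 1) p.2.1) := fun x => hspan ▸ Submodule.mem_top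
  have hbracket : ∀ x y : L, π₀ ⁅x, y⁆ = ⁅π₀ x, π₀ y⁆ := by
    have hgen : ∀ (v : Fin d → ℂ) (s : Fin d → ℤ) (u : Fin d → ℂ) (r : Fin d → ℤ),
        π₀ ⁅T v s, T u r⁆ = ⁅π₀ (T v s), π₀ (T u r)⁆ := by
      intro v s u r
      rw [hbr, hkey, hkey, piMat_bracket]
      simp only [map_add, map_sub, map_smul, hkey]
    intro x y
    refine Submodule.span_induction
      (p := fun z _ => π₀ ⁅z, y⁆ = ⁅π₀ z, π₀ y⁆) ?_ (by simp) ?_ ?_ (hmem x)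
    · rintro _ ⟨p, rfl⟩
      refine Submodule.span_induction
        (p := fun w _ => π₀ ⁅T (Pi.single p.1 1) p.2.1, w⁆
          = ⁅π₀ (T (Pi.single p.1 1) p.2.1), π₀ w⁆) ?_ (by simp) ?_ ?_ (hmem y)
      · rintro _ ⟨q, rfl⟩; exact hgen _ _ _ _
      · intro a b _ _ ha hb; simp [lie_add, map_add, ha, hb]
      · intro c z _ hz; simp [lie_smul, map_smul, hz]
    · intro a b _ _ ha hb; simp [add_lie, map_add, ha, hb]
    · intro c z _ hz; simp [smul_lie, map_smul, hz]
  -- surjectivity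
  have hsurj : Function.Surjective π₀ := by
    intro A
    refine ⟨∑ i, ∑ j, A i j • T (Pi.single j 1) (Pi.single i 1), ?_⟩
    rw [map_sum]
    simp only [map_sum, map_smul, hkey]
    ext a b
    simp [piMat, Matrix.sum_apply, Pi.single_apply, mul_ite, ite_mul,
      Finset.sum_ite_eq, Finset.sum_ite_eq']
  -- I₂ ⊆ ker π₀
  have hIker : ∀ x ∈ Ik T 2, π₀ x = 0 := by
    intro x hx
    have hle : Ik T 2 ≤ LinearMap.ker π₀ := by
      refine Submodule.span_le.2 ?_
      rintro _ ⟨u, r, m, rfl⟩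
      simp only [SetLike.mem_coe, LinearMap.mem_ker, Tk, map_sum, map_smul, hkey]
      rw [fin2_finset_sum (fun S => ((-1:ℂ) ^ S.card) • piMat d u (r + ∑ i ∈ S, m i))]
      have hc : ({0,1} : Finset (Fin 2)).card = 2 := by decide
      rw [hc, Finset.sum_pair (by decide : (0 : Fin 2) ≠ 1)]
      simp only [Finset.card_empty, Finset.card_singleton, pow_zero, pow_one, pow_two,
        Finset.sum_empty, Finset.sum_singleton, one_smul, neg_one_mul, neg_neg, neg_smul,
        add_zero]
      ext a b
      simp only [Matrix.add_apply, Matrix.neg_apply, Matrix.smul_apply, piMat,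
        Matrix.of_apply, Pi.add_apply, Int.cast_add, Matrix.zero_apply, smul_eq_mul, one_mul]
      ring
    exact LinearMap.mem_ker.1 (hle hx)
  -- quotient map is additive in r
  have hq_add : ∀ (u : Fin d → ℂ) (r s : Fin d → ℤ),
      (Ik T 2).mkQ (T u (r + s)) = (Ik T 2).mkQ (T u r) + (Ik T 2).mkQ (T u s) := by
    intro u r s
    have hm : Tk T 2 u 0 ![r, s] ∈ Ik T 2 :=
      Submodule.subset_span ⟨u, 0, ![r, s], rfl⟩
    have h0 : Tk T 2 u 0 ![r, s] = T u (r + s) - T u r - T u s := by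
      rw [Tk, fin2_finset_sum]
      have hc : ({0,1} : Finset (Fin 2)).card = 2 := by decide
      rw [hc, Finset.sum_pair (by decide : (0 : Fin 2) ≠ 1)]
      simp only [Finset.card_empty, Finset.card_singleton, pow_zero, pow_one, pow_two,
        Finset.sum_empty, Finset.sum_singleton, one_smul, neg_one_mul, neg_neg, neg_smul,
        Matrix.cons_val_zero, Matrix.cons_val_one, Matrix.head_cons, zero_add, hzero]
      abel
    have hz : (Ik T 2).mkQ (T u (r + s) - T u r - T u s) = 0 := by
      rw [← h0, Submodule.mkQ_apply, Submodule.Quotient.mk_eq_zero]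
      exact hm
    rw [map_sub, map_sub, sub_sub, sub_eq_zero] at hz
    rw [hz]
  -- r-linearity modulo I₂
  have hq_lin : ∀ (u : Fin d → ℂ) (r : Fin d → ℤ),
      (Ik T 2).mkQ (T u r)
        = ∑ j, (r j : ℂ) • (Ik T 2).mkQ (T u (Pi.single j 1)) := by
    intro u r
    let F : (Fin d → ℤ) →+ (L ⧸ Ik T 2) :=
      AddMonoidHom.mk' (fun r => (Ik T 2).mkQ (T u r)) (fun r s => hq_add u r s)
    have hr : r = ∑ j, (r j) • (Pi.single j (1:ℤ) : Fin d → ℤ) := pi_sum_single_smul d r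
    calc (Ik T 2).mkQ (T u r) = F r := rfl
      _ = F (∑ j, (r j) • (Pi.single j (1:ℤ) : Fin d → ℤ)) := by rw [← hr]
      _ = ∑ j, (r j) • F ((Pi.single j (1:ℤ) : Fin d → ℤ)) := by
          rw [map_sum]
          exact Finset.sum_congr rfl fun j _ => map_zsmul F _ _
      _ = ∑ j, (r j : ℂ) • (Ik T 2).mkQ (T u (Pi.single j 1)) :=
          Finset.sum_congr rfl fun j _ => (Int.cast_smul_eq_zsmul ℂ _ _).symm
  -- the inverse-ish map φ
  let v : Fin d → Fin d → L ⧸ Ik T 2 :=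
    fun i j => (Ik T 2).mkQ (T (Pi.single i 1) (Pi.single j 1))
  let φ : Matrix (Fin d) (Fin d) ℂ →ₗ[ℂ] L ⧸ Ik T 2 :=
    { toFun := fun A => ∑ i, ∑ j, A j i • v i j
      map_add' := by
        intro A B
        simp [Matrix.add_apply, add_smul, Finset.sum_add_distrib]
      map_smul' := by
        intro c A
        simp [Matrix.smul_apply, smul_smul, Finset.smul_sum] }
  have hφπ : ∀ x : L, φ (π₀ x) = (Ik T 2).mkQ x := by
    intro x
    refine Submodule.span_induction
      (p := fun z _ => φ (π₀ z) = (Ik T 2).mkQ z) ?_ (by simp) ?_ ?_ (hmem x)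
    · rintro _ ⟨p, rfl⟩
      rw [hπ₀b p, hq_lin]
      show ∑ i, ∑ j, (piMat d (Pi.single p.1 1) p.2.1) j i • v i j = _
      have : ∀ i j, (piMat d (Pi.single p.1 1) p.2.1) j i
          = (if i = p.1 then 1 else 0) * ((p.2.1 j : ℂ)) := by
        intro i j; simp [piMat, Pi.single_apply]
      simp only [this, ite_mul, one_mul, zero_mul, ite_smul, zero_smul]
      have hsw : ∀ x : Fin d, (∑ j, if x = p.1 then ((p.2.1 j : ℂ)) • v x j else 0)
          = if x = p.1 then ∑ j, ((p.2.1 j : ℂ)) • v x j else 0 := by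
        intro x; split_ifs <;> simp
      simp only [hsw]
      rw [Finset.sum_ite_eq' Finset.univ p.1 (fun i => ∑ j, (p.2.1 j : ℂ) • v i j)]
      simp [v]
    · intro a b _ _ ha hb; simp [map_add, ha, hb]
    · intro c z _ hz; simp [map_smul, hz]
  have hker2 : ∀ x : L, π₀ x = 0 → x ∈ Ik T 2 := by
    intro x h
    have h2 := hφπ x
    rw [h, map_zero] at h2
    rw [Submodule.mkQ_apply] at h2
    exact (Submodule.Quotient.mk_eq_zero _).1 h2.symm
  -- assemble
  refine ⟨{ toLinearMap := π₀, map_lie' := fun {x y} => hbracket x y }, ?_, ?_, ?_⟩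
  · exact hsurj
  · intro u r
    show π₀ (T u r) = _
    rw [hkey, piMat_eq_sum]
  · intro x
    exact ⟨hker2 x, fun hx => hIker x hx⟩
end

section
/- Let 𝔤 be a Lie algebra over ℂ, J an ideal of 𝔤, and {J_α}_{α∈B} a family of elements of 𝔤 whose ℂ-span equals J. Suppose there exist an element I ∈ 𝔤 and a scalar λ ∈ ℂ with λ ≠ 0 such that [I, J_α] = λ J_α for all α ∈ B. Then J acts trivially on every nonzero finite-dimensional irreducible 𝔤-module V, i.e. x·v = 0 for all x ∈ J and v ∈ V. -/
/-- (Billig's lemma.)  Let `𝔤` be a Lie algebra over `ℂ`, `J` an ideal of `𝔤` spanned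
by a family `{J_α}_{α ∈ B}`, and suppose there are `I ∈ 𝔤` and `λ ≠ 0` with
`[I, J_α] = λ J_α` for all `α ∈ B`.  Then `J` acts trivially on every nonzero
finite-dimensional irreducible `𝔤`-module `V`. -/
theorem ideal_acts_trivially_of_scaling_element
    (𝔤 : Type*) [LieRing 𝔤] [LieAlgebra ℂ 𝔤]
    (J : LieIdeal ℂ 𝔤) (B : Type*) (Jf : B → 𝔤)
    (hspan : Submodule.span ℂ (Set.range Jf) = (J : Submodule ℂ 𝔤))
    (I : 𝔤) (lam : ℂ) (hlam : lam ≠ 0)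
    (hscale : ∀ α : B, ⁅I, Jf α⁆ = lam • Jf α)
    (V : Type*) [AddCommGroup V] [Module ℂ V]
    [LieRingModule 𝔤 V] [LieModule ℂ 𝔤 V]
    [FiniteDimensional ℂ V] [Nontrivial V]
    (hVirr : ∀ W : Submodule ℂ V,
      (∀ (x : 𝔤), ∀ v ∈ W, ⁅x, v⁆ ∈ W) → W = ⊥ ∨ W = ⊤) :
    ∀ x ∈ J, ∀ v : V, ⁅x, v⁆ = 0 := by
  classical
  letI : LieRing (Module.End ℂ V) := LieRing.ofAssociativeRing
  set T : 𝔤 →ₗ⁅ℂ⁆ Module.End ℂ V := LieModule.toEnd ℂ 𝔤 V with hTdef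
  set X : B → Module.End ℂ V := fun α => T (Jf α) with hXdef
  set A : Module.End ℂ V := T I with hAdef
  -- the derivation ad A on End V
  set D : Module.End ℂ (Module.End ℂ V) :=
    LinearMap.mulLeft ℂ A - LinearMap.mulRight ℂ A with hDdef
  have hD : ∀ Y : Module.End ℂ V, D Y = A * Y - Y * A := fun Y => rfl
  -- each X α is an eigenvector of D with eigenvalue lam
  have hXeig : ∀ α, D (X α) = lam • X α := by
    intro α
    have h1 : ⁅A, X α⁆ = T ⁅I, Jf α⁆ := (T.map_lie I (Jf α)).symm
    rw [hD, ← Ring.lie_def, h1, hscale α, map_smul]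
  -- product of eigenvectors is an eigenvector for the sum
  have hmul : ∀ (μ ν : ℂ) (Y Z : Module.End ℂ V), D Y = μ • Y → D Z = ν • Z →
      D (Y * Z) = (μ + ν) • (Y * Z) := by
    intro μ ν Y Z hY hZ
    rw [hD] at hY hZ ⊢
    have : A * (Y * Z) - Y * Z * A = (A * Y - Y * A) * Z + Y * (A * Z - Z * A) := by
      noncomm_ring
    rw [this, hY, hZ, smul_mul_assoc, mul_smul_comm, add_smul]
  -- products of length n are eigenvectors with eigenvalue n * lam
  have hlist : ∀ l : List B, D ((l.map X).prod) = ((l.length : ℂ) * lam) • (l.map X).prod := by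
    intro l
    induction l with
    | nil => simp [hD]
    | cons a l ih =>
      have h := hmul lam ((l.length : ℂ) * lam) (X a) ((l.map X).prod) (hXeig a) ih
      have hcoef : (((l.length + 1 : ℕ)) : ℂ) * lam = lam + (l.length : ℂ) * lam := by
        push_cast; ring
      rw [List.map_cons, List.prod_cons, List.length_cons, hcoef]
      exact h
  -- only finitely many eigenvalues: some n * lam has trivial eigenspace
  have hfin : ∃ N : ℕ, Module.End.eigenspace D ((N : ℂ) * lam) = ⊥ := by
    by_contra hcon
    push_neg at hcon
    set d := Module.finrank ℂ (Module.End ℂ V) with hd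
    have hvec : ∀ n : Fin (d + 1), ∃ Y : Module.End ℂ V,
        Y ∈ Module.End.eigenspace D ((n : ℂ) * lam) ∧ Y ≠ 0 := by
      intro n
      exact (Submodule.ne_bot_iff _).mp (hcon n)
    choose Y hY hY0 using hvec
    have hinj : Function.Injective (fun n : Fin (d + 1) => ((n : ℕ) : ℂ) * lam) := by
      intro m n h
      simp only [mul_eq_mul_right_iff, Nat.cast_inj, hlam, or_false] at h
      exact Fin.ext h
    have hli : LinearIndependent ℂ Y :=
      D.eigenvectors_linearIndependent' (fun n : Fin (d+1) => ((n : ℕ) : ℂ) * lam) hinj Y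
        (fun n => ⟨hY n, hY0 n⟩)
    have hcard := hli.fintype_card_le_finrank
    rw [Fintype.card_fin] at hcard
    omega
  obtain ⟨N, hN⟩ := hfin
  -- every product of N generators is zero
  have hzero : ∀ l : List B, l.length = N → (l.map X).prod = 0 := by
    intro l hl
    have := hlist l
    rw [hl] at this
    have hmem : (l.map X).prod ∈ Module.End.eigenspace D ((N : ℂ) * lam) :=
      Module.End.mem_eigenspace_iff.mpr this
    rw [hN] at hmem
    simpa using hmem
  -- the common kernel
  set K : Submodule ℂ V := ⨅ α : B, LinearMap.ker (X α) with hKdef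
  have hKmem : ∀ v : V, v ∈ K ↔ ∀ α, X α v = 0 := by
    intro v; simp [hKdef, Submodule.mem_iInf, LinearMap.mem_ker]
  -- K is nonzero
  have hKne : K ≠ ⊥ := by
    intro hKbot
    have key : ∀ n : ℕ, ∀ v : V, (∀ l : List B, l.length = n → (l.map X).prod v = 0) → v = 0 := by
      intro n
      induction n with
      | zero => intro v h; simpa using h [] rfl
      | succ n ih =>
        intro v h
        have hXv : ∀ α, X α v = 0 := by
          intro α
          apply ih
          intro l hl
          have := h (l ++ [α]) (by simp [hl])
          simpa [List.map_append, List.prod_append] using this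
        have : v ∈ K := (hKmem v).mpr hXv
        rw [hKbot] at this
        simpa using this
    obtain ⟨v, hv⟩ := exists_ne (0 : V)
    exact hv (key N v fun l hl => by rw [hzero l hl]; rfl)
  -- membership in J kills elements of K
  have hJkill : ∀ v : V, v ∈ K → ∀ y ∈ J, ⁅y, v⁆ = 0 := by
    intro v hv
    have hgen : ∀ y ∈ Submodule.span ℂ (Set.range Jf), ⁅y, v⁆ = 0 := by
      intro y hy'
      induction hy' using Submodule.span_induction with
      | mem z hz =>
        obtain ⟨α, rfl⟩ := hz
        exact (hKmem v).mp hv α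
      | zero => simp
      | add a b _ _ ha hb => rw [add_lie, ha, hb, add_zero]
      | smul c a _ ha => rw [smul_lie, ha, smul_zero]
    intro y hy
    exact hgen y (by rw [hspan]; exact (LieSubmodule.mem_toSubmodule _).mpr hy)
  -- K is 𝔤-invariant
  have hKinv : ∀ (x : 𝔤), ∀ v ∈ K, ⁅x, v⁆ ∈ K := by
    intro x v hv
    rw [hKmem]
    intro α
    have hα : X α ⁅x, v⁆ = ⁅Jf α, ⁅x, v⁆⁆ := rfl
    have hJfα : Jf α ∈ J := by
      have h0 : Jf α ∈ Submodule.span ℂ (Set.range Jf) := Submodule.subset_span ⟨α, rfl⟩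
      rw [hspan] at h0
      exact h0
    have h1 : ⁅Jf α, x⁆ ∈ J := by
      have : ⁅x, Jf α⁆ ∈ J := J.lie_mem hJfα
      have hneg : ⁅Jf α, x⁆ = -⁅x, Jf α⁆ := by rw [← lie_skew]
      rw [hneg]; exact neg_mem this
    rw [hα, leibniz_lie, hJkill v hv _ h1, hJkill v hv _ hJfα]
    simp
  -- conclude
  have hKtop : K = ⊤ := (hVirr K hKinv).resolve_left hKne
  intro x hx v
  exact hJkill v (hKtop ▸ Submodule.mem_top) x hx
end
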